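/- arXiv:math-ph/0403049 — 9 statements merged into one kernel-verified Lean document; each statement's English description precedes it below -/
import Mathlib

section
/- Fix an integer q ≥ 1. Let L depend differentiably (coefficientwise) on the variables t_q and t_p for all p ≥ 1, with L ∈ A⁺ of the form L = Λ + u₀ + u₋₁Λ⁻¹ + ⋯ (leading coefficient 1). If the Zakharov–Shabat equations ∂(L^q)₊/∂t_p − ∂(L^p)₊/∂t_q + [(L^q)₊, (L^p)₊] = 0 hold for every p ≥ 1, then the Lax equation ∂L/∂t_q = [(L^q)₊, L] holds. -/
noncomputable section

/-- Formal difference operators `X = ∑ₖ aₖ Λᵏ`, encoded by their coefficient functions: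
`X k n` is the value `aₖ(n)` of the coefficient of `Λᵏ`. -/
abbrev DOp : Type := ℤ → ℤ → ℂ

/-- Product of difference operators, determined by `Λᵏ a = (a ∘ (·+k)) Λᵏ`:
the coefficient of `Λᵐ` in `X*Y` at `n` is `∑_{k+l=m} aₖ(n) bₗ(n+k)`. -/
def dmul (X Y : DOp) : DOp := fun m n => ∑ᶠ k : ℤ, X k n * Y (m - k) (n + k)

/-- Commutator `[X,Y] = XY - YX`. -/
def dcomm (X Y : DOp) : DOp := dmul X Y - dmul Y X

/-- Truncation `X_{≥K}`. -/
def truncGe (K : ℤ) (X : DOp) : DOp := fun k n => if K ≤ k then X k n else 0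
/-- Truncation `X_{≤K}`. -/
def truncLe (K : ℤ) (X : DOp) : DOp := fun k n => if k ≤ K then X k n else 0
/-- Truncation `X_{>K}`. -/
def truncGt (K : ℤ) (X : DOp) : DOp := fun k n => if K < k then X k n else 0
/-- Truncation `X_{<K}`. -/
def truncLt (K : ℤ) (X : DOp) : DOp := fun k n => if k < K then X k n else 0

/-- `X₊ := X_{≥0}`. -/
def dpos (X : DOp) : DOp := truncGe 0 X

/-- `X₋ := X_{<0}`. -/
def dneg (X : DOp) : DOp := truncLt 0 X

/-- The shift operator `Λ`. -/
def dlam : DOp := fun k _ => if k = 1 then 1 else 0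

/-- The identity operator. -/
def done : DOp := fun k _ => if k = 0 then 1 else 0

/-- Powers of a difference operator. -/
def dpow (X : DOp) : ℕ → DOp
  | 0 => done
  | n + 1 => dmul (dpow X n) X

/-- The residue: coefficient of `Λ⁰`. -/
def dres (X : DOp) : ℤ → ℂ := X 0

/-- The trace: `tr X = ∑ₙ a₀(n)`. -/
def dtr (X : DOp) : ℂ := ∑ᶠ n : ℤ, X 0 n

/-- `A⁺`: coefficients vanish in all sufficiently high degrees. -/
def IsUpper (X : DOp) : Prop := ∃ K : ℤ, ∀ k : ℤ, K < k → X k = 0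

/-- `A⁻`: coefficients vanish in all sufficiently low degrees. -/
def IsLower (X : DOp) : Prop := ∃ K : ℤ, ∀ k : ℤ, k < K → X k = 0

/-- `A⁰`: only finitely many nonzero coefficient functions. -/
def IsBdd (X : DOp) : Prop := {k : ℤ | X k ≠ 0}.Finite

/-- All coefficient functions finitely supported (finite total support). -/
def FinSuppOp (X : DOp) : Prop := (Function.support fun pr : ℤ × ℤ => X pr.1 pr.2).Finite

/-- Membership in `𝔄 = A⁺ ⊕ A⁻`. -/
def InA (x : DOp × DOp) : Prop := IsUpper x.1 ∧ IsLower x.2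

/-- Componentwise commutator on `𝔄`. -/
def pcomm (x y : DOp × DOp) : DOp × DOp := (dcomm x.1 y.1, dcomm x.2 y.2)

/-- Trace pairing `⟨(X,X̄),(Y,Ȳ)⟩ = tr(XY) + tr(X̄Ȳ)` on `𝔄`. -/
def ip (x y : DOp × DOp) : ℂ := dtr (dmul x.1 y.1) + dtr (dmul x.2 y.2)

/-!
Put `M = ∂L/∂t_q - [(L^q)₊, L]`. Both terms have degree `≤ 0`: the leading part `Λ` of `L` does
not depend on time, and `[(L^q)₊, L] = -[(L^q)₋, L]` because `L^q` commutes with `L`. Since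
`∂(L^p)/∂t_q - [(L^q)₊, L^p] = ∑_{i<p} L^i M L^{p-1-i}`, the Zakharov–Shabat equations say that
this sum vanishes in all degrees `> q`. If `M = ∑_{k ≤ -j} m_k Λ^k`, the coefficient of `Λ^{p-1-j}`
in the sum is `∑_{i<p} m_{-j}(n+i)`; comparing `p` and `p + 1` for large `p` gives `m_{-j} = 0`, so
by induction on `j` we get `M = 0`.
-/

theorem finsum_comm_of_hasFiniteSupport {α β M : Type*} [AddCommMonoid M] {F : α → β → M}
    (h : Function.HasFiniteSupport (Function.uncurry F)) :
    ∑ᶠ a, ∑ᶠ b, F a b = ∑ᶠ b, ∑ᶠ a, F a b := by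
  have h' : (Function.support (Function.uncurry F ∘ Equiv.prodComm β α)).Finite := by
    rw [Function.support_comp_eq_preimage]
    exact h.preimage (Equiv.prodComm β α).injective.injOn
  calc ∑ᶠ a, ∑ᶠ b, F a b = ∑ᶠ ab, Function.uncurry F ab := (finsum_curry _ h).symm
    _ = ∑ᶠ ba, Function.uncurry F (Equiv.prodComm β α ba) := (finsum_comp_equiv _).symm
    _ = ∑ᶠ b, ∑ᶠ a, F a b := finsum_curry _ h'

namespace DOp

def DegLE (a : ℤ) (X : DOp) : Prop := ∀ k, a < k → X k = 0

variable {a b c : ℤ} {X Y Z W P : DOp}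

theorem DegLE.mono (h : a ≤ b) (hX : DegLE a X) : DegLE b X :=
  fun k hk => hX k (h.trans_lt hk)

theorem DegLE.add (hX : DegLE a X) (hY : DegLE a Y) : DegLE a (X + Y) := fun k hk => by
  rw [Pi.add_apply, hX k hk, hY k hk, add_zero]

theorem DegLE.sub (hX : DegLE a X) (hY : DegLE a Y) : DegLE a (X - Y) := fun k hk => by
  rw [Pi.sub_apply, hX k hk, hY k hk, sub_zero]

theorem support_dmul_summand_subset (hX : DegLE a X) (hY : DegLE b Y) (m n : ℤ) :
    (Function.support fun k => X k n * Y (m - k) (n + k)) ⊆ Set.Icc (m - b) a := by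
  intro k hk
  by_contra h
  rw [Set.mem_Icc, not_and_or, not_le, not_le] at h
  rw [Function.mem_support] at hk
  apply hk
  rcases h with h | h
  · rw [hY (m - k) (by omega), Pi.zero_apply, mul_zero]
  · rw [hX k h, Pi.zero_apply, zero_mul]

theorem finite_support_dmul_summand (hX : DegLE a X) (hY : DegLE b Y) (m n : ℤ) :
    (Function.support fun k => X k n * Y (m - k) (n + k)).Finite :=
  (Set.finite_Icc _ _).subset (support_dmul_summand_subset hX hY m n)

theorem dmul_apply_eq_sum (hX : DegLE a X) (hY : DegLE b Y) {m : ℤ} {s : Finset ℤ}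
    (hs : Set.Icc (m - b) a ⊆ s) (n : ℤ) :
    dmul X Y m n = ∑ k ∈ s, X k n * Y (m - k) (n + k) :=
  finsum_eq_sum_of_support_subset _ ((support_dmul_summand_subset hX hY m n).trans hs)

theorem DegLE.dmul (hX : DegLE a X) (hY : DegLE b Y) : DegLE (a + b) (dmul X Y) := by
  intro m hm
  funext n
  have hempty : Set.Icc (m - b) a = ∅ := Set.Icc_eq_empty (by omega)
  rw [dmul_apply_eq_sum hX hY (s := ∅) (by rw [hempty]; exact Set.empty_subset _)]
  rfl

theorem dmul_apply_add (hX : DegLE a X) (hY : DegLE b Y) (n : ℤ) :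
    dmul X Y (a + b) n = X a n * Y b (n + a) := by
  rw [dmul_apply_eq_sum hX hY (s := {a}) (by simp), Finset.sum_singleton, add_sub_cancel_left]

theorem degLE_done : DegLE 0 done := fun k hk => by
  funext n
  exact if_neg hk.ne'

theorem dmul_done (X : DOp) : dmul X done = X := by
  funext m n
  rw [dmul, finsum_eq_single _ m fun k hk => by simp [done, sub_eq_zero, hk.symm]]
  simp [done]

theorem done_dmul (X : DOp) : dmul done X = X := by
  funext m n
  rw [dmul, finsum_eq_single _ 0 fun k hk => by simp [done, hk]]
  simp [done]

theorem dmul_sub_left {a' : ℤ} (hY : DegLE a Y) (hZ : DegLE a' Z) (hX : DegLE b X) :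
    dmul (Y - Z) X = dmul Y X - dmul Z X := by
  funext m n
  simp only [dmul, Pi.sub_apply, sub_mul]
  exact finsum_sub_distrib (finite_support_dmul_summand hY hX m n)
    (finite_support_dmul_summand hZ hX m n)

theorem dmul_sub_right {b' : ℤ} (hX : DegLE a X) (hY : DegLE b Y) (hZ : DegLE b' Z) :
    dmul X (Y - Z) = dmul X Y - dmul X Z := by
  funext m n
  simp only [dmul, Pi.sub_apply, mul_sub]
  exact finsum_sub_distrib (finite_support_dmul_summand hX hY m n)
    (finite_support_dmul_summand hX hZ m n)

theorem dmul_assoc (hX : DegLE a X) (hY : DegLE b Y) (hZ : DegLE c Z) :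
    dmul (dmul X Y) Z = dmul X (dmul Y Z) := by
  funext m n
  have hsupp : (Function.support (Function.uncurry fun k j =>
      X k n * Y (j - k) (n + k) * Z (m - j) (n + j))).Finite := by
    refine ((Set.finite_Icc (m - b - c) a).prod (Set.finite_Icc (m - c) (a + b))).subset ?_
    rintro ⟨k, j⟩ hkj
    simp only [Function.mem_support, Function.uncurry_apply_pair] at hkj
    have hka : k ≤ a := not_lt.mp fun h => hkj (by rw [hX k h, Pi.zero_apply, zero_mul, zero_mul])
    have hjb : j - k ≤ b :=
      not_lt.mp fun h => hkj (by rw [hY _ h, Pi.zero_apply, mul_zero, zero_mul])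
    have hmc : m - j ≤ c := not_lt.mp fun h => hkj (by rw [hZ _ h, Pi.zero_apply, mul_zero])
    simp only [Set.mem_prod, Set.mem_Icc]
    omega
  calc dmul (dmul X Y) Z m n
      = ∑ᶠ j, ∑ᶠ k, X k n * Y (j - k) (n + k) * Z (m - j) (n + j) := by
        simp only [dmul, finsum_mul]
    _ = ∑ᶠ k, ∑ᶠ j, X k n * Y (j - k) (n + k) * Z (m - j) (n + j) :=
        (finsum_comm_of_hasFiniteSupport hsupp).symm
    _ = ∑ᶠ k, ∑ᶠ l, X k n * (Y l (n + k) * Z (m - k - l) (n + k + l)) := by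
        refine finsum_congr fun k => ?_
        rw [← finsum_comp_equiv (Equiv.addLeft k)]
        simp only [Equiv.coe_addLeft, add_sub_cancel_left, sub_add_eq_sub_sub, ← add_assoc,
          mul_assoc]
    _ = dmul X (dmul Y Z) m n := by
        simp only [dmul, mul_finsum]

theorem DegLE.dpow (hX : DegLE a X) (p : ℕ) : DegLE (p * a) (dpow X p) := by
  induction p with
  | zero => rw [Nat.cast_zero, zero_mul]; exact degLE_done
  | succ p ih =>
    rw [Nat.cast_succ, add_one_mul]
    exact ih.dmul hX

theorem dpow_apply_self (hX : DegLE 1 X) (h1 : ∀ n, X 1 n = 1) (p : ℕ) (n : ℤ) :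
    dpow X p p n = 1 := by
  induction p with
  | zero => simp [dpow, done]
  | succ p ih =>
    have := dmul_apply_add (hX.dpow p) hX n
    rw [mul_one] at this
    rw [dpow, Nat.cast_succ, this, ih, h1, mul_one]

theorem dmul_dpow_comm (hX : DegLE a X) (p : ℕ) : dmul (dpow X p) X = dmul X (dpow X p) := by
  induction p with
  | zero => rw [dpow, dmul_done, done_dmul]
  | succ p ih =>
    rw [dpow]
    nth_rw 1 [ih]
    exact dmul_assoc hX (hX.dpow p) hX

/-- `dpowDeriv X W p = ∑_{i<p} X^i W X^(p-1-i)`, the derivative of `X ↦ X^p` at `X` along `W`. -/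
def dpowDeriv (X W : DOp) : ℕ → DOp
  | 0 => 0
  | p + 1 => dmul (dpowDeriv X W p) X + dmul (dpow X p) W

theorem DegLE.dpowDeriv (hX : DegLE a X) (hW : DegLE b W) (p : ℕ) :
    DegLE (p * a + b - a) (dpowDeriv X W p) := by
  induction p with
  | zero => exact fun _ _ => rfl
  | succ p ih =>
    have hdeg : ((p + 1 : ℕ) : ℤ) * a + b - a = p * a + b := by push_cast; ring
    rw [hdeg]
    exact ((ih.dmul hX).mono (sub_add_cancel _ _).le).add ((hX.dpow p).dmul hW)

theorem dpowDeriv_sub {W₁ W₂ : DOp} (hX : DegLE a X) (hW₁ : DegLE b W₁) (hW₂ : DegLE b W₂)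
    (p : ℕ) : dpowDeriv X (W₁ - W₂) p = dpowDeriv X W₁ p - dpowDeriv X W₂ p := by
  induction p with
  | zero => exact (sub_zero 0).symm
  | succ p ih =>
    rw [dpowDeriv, ih, dmul_sub_left (hX.dpowDeriv hW₁ p) (hX.dpowDeriv hW₂ p) hX,
      dmul_sub_right (hX.dpow p) hW₁ hW₂, dpowDeriv, dpowDeriv]
    abel

theorem dcomm_dpow (hP : DegLE b P) (hX : DegLE a X) (p : ℕ) :
    dcomm P (dpow X p) = dpowDeriv X (dcomm P X) p := by
  induction p with
  | zero => rw [dpow, dcomm, dmul_done, done_dmul, sub_self, dpowDeriv]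
  | succ p ih =>
    have hXp := hX.dpow p
    rw [dpowDeriv, ← ih, dcomm, dcomm, dcomm, dpow,
      dmul_sub_left (hP.dmul hXp) (hXp.dmul hP) hX, dmul_sub_right hXp (hP.dmul hX) (hX.dmul hP),
      dmul_assoc hP hXp hX, dmul_assoc hXp hP hX, dmul_assoc hXp hX hP]
    abel

theorem dpowDeriv_succ_apply (hX : DegLE 1 X) (h1 : ∀ n, X 1 n = 1) {d : ℤ} (hW : DegLE d W)
    (p : ℕ) (n : ℤ) :
    dpowDeriv X W (p + 1) (p + d) n = dpowDeriv X W p (p + d - 1) n + W d (n + p) := by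
  have hD := hX.dpowDeriv hW p
  have hXp := hX.dpow p
  rw [mul_one] at hD hXp
  have hfirst := dmul_apply_add hD hX n
  have hsecond := dmul_apply_add hXp hW n
  rw [sub_add_cancel, h1, mul_one] at hfirst
  rw [dpow_apply_self hX h1, one_mul] at hsecond
  rw [dpowDeriv, Pi.add_apply, Pi.add_apply, hfirst, hsecond]

theorem eq_zero_of_degLE_dpowDeriv (hX : DegLE 1 X) (h1 : ∀ n, X 1 n = 1) (hW : DegLE 0 W)
    {c : ℤ} (h : ∀ p : ℕ, 1 ≤ p → DegLE c (dpowDeriv X W p)) : W = 0 := by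
  have key : ∀ j : ℕ, DegLE (-j) W := by
    intro j
    induction j with
    | zero => simpa using hW
    | succ j ih =>
      intro k hk
      obtain rfl | hk := (show k = -j ∨ -j < k by omega)
      · funext n
        set p := c.toNat + j + 2
        have := dpowDeriv_succ_apply hX h1 ih p (n - p)
        rw [h (p + 1) (by omega) _ (by omega), h p (by omega) _ (by omega)] at this
        simpa using this.symm
      · exact ih k hk
  funext k n
  exact congrFun (key ((-k).toNat + 1) k (by omega)) n

theorem hasDerivAt_dpow_apply {F : ℝ → DOp} {F' : DOp} {τ : ℝ} (hF : ∀ σ, DegLE a (F σ))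
    (hF' : DegLE a F') (hd : ∀ k n, HasDerivAt (fun σ => F σ k n) (F' k n) τ) (p : ℕ) (k n : ℤ) :
    HasDerivAt (fun σ => dpow (F σ) p k n) (dpowDeriv (F τ) F' p k n) τ := by
  induction p generalizing k n with
  | zero => exact hasDerivAt_const τ (done k n)
  | succ p ih =>
    have hs : Set.Icc (k - a) (p * a) ⊆ (Finset.Icc (k - a) (p * a) : Set ℤ) := by
      rw [Finset.coe_Icc]
    have hs' : Set.Icc (k - a) (p * a + a - a) ⊆ (Finset.Icc (k - a) (p * a) : Set ℤ) := by
      rw [Finset.coe_Icc, add_sub_cancel_right]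
    have hval : dpowDeriv (F τ) F' (p + 1) k n = ∑ j ∈ Finset.Icc (k - a) (p * a),
        (dpowDeriv (F τ) F' p j n * F τ (k - j) (n + j)
          + dpow (F τ) p j n * F' (k - j) (n + j)) := by
      rw [Finset.sum_add_distrib, ← dmul_apply_eq_sum ((hF τ).dpowDeriv hF' p) (hF τ) hs',
        ← dmul_apply_eq_sum ((hF τ).dpow p) hF' hs]
      rfl
    have hfun : (fun σ => dpow (F σ) (p + 1) k n) =
        fun σ => ∑ j ∈ Finset.Icc (k - a) (p * a), dpow (F σ) p j n * F σ (k - j) (n + j) :=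
      funext fun σ => dmul_apply_eq_sum ((hF σ).dpow p) (hF σ) hs n
    rw [hval, hfun]
    exact HasDerivAt.fun_sum fun j _ => (ih j n).mul (hd _ _)

theorem dpos_apply_of_nonneg {k : ℤ} (hk : 0 ≤ k) : dpos X k = X k :=
  funext fun _ => if_pos hk

theorem DegLE.dpos (hX : DegLE a X) : DegLE a (dpos X) := fun k hk =>
  funext fun n => show ite _ _ _ = 0 by simp [hX k hk]

theorem degLE_dneg (X : DOp) : DegLE (-1) (dneg X) := fun k hk =>
  funext fun _ => if_neg (by omega)

theorem dpos_eq_sub_dneg (X : DOp) : dpos X = X - dneg X := by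
  funext k n
  simp only [dpos, dneg, truncGe, truncLt, Pi.sub_apply]
  split_ifs <;> first | omega | simp

theorem dcomm_dpos_apply (hP : DegLE a P) (hX : DegLE b X) {k : ℤ} (hk : a ≤ k) (n : ℤ) :
    dcomm P (dpos X) k n = dcomm P X k n := by
  have hlow : DegLE (a - 1) (dcomm P (dneg X)) :=
    (hP.dmul (degLE_dneg X)).sub (((degLE_dneg X).dmul hP).mono (by omega))
  rw [dpos_eq_sub_dneg, dcomm, dmul_sub_right hP hX (degLE_dneg X),
    dmul_sub_left hX (degLE_dneg X) hP]
  have := congrFun (hlow k (by omega)) n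
  simp only [dcomm, Pi.sub_apply, Pi.zero_apply] at this ⊢
  linear_combination -this

theorem degLE_dcomm_dpos_dpow_self (hX : DegLE 1 X) (q : ℕ) :
    DegLE 0 (dcomm (dpos (dpow X q)) X) := fun k hk => funext fun n => by
  have hcomm : dcomm X (dpow X q) = 0 := by rw [dcomm, dmul_dpow_comm hX, sub_self]
  have := dcomm_dpos_apply hX (hX.dpow q) hk n
  rw [hcomm] at this
  simp only [dcomm, Pi.sub_apply, Pi.zero_apply] at this ⊢
  linear_combination -this

theorem eq_dlam_of_truncGe_one_eq_dlam (h : truncGe 1 X = dlam) {k : ℤ} (hk : 1 ≤ k) :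
    X k = dlam k :=
  funext fun n => by simpa [truncGe, hk] using congrFun (congrFun h k) n

theorem degLE_one_of_truncGe_one_eq_dlam (h : truncGe 1 X = dlam) : DegLE 1 X := fun k hk =>
  funext fun _ => by rw [eq_dlam_of_truncGe_one_eq_dlam h hk.le, dlam, if_neg hk.ne']; rfl

theorem apply_one_of_truncGe_one_eq_dlam (h : truncGe 1 X = dlam) (n : ℤ) : X 1 n = 1 := by
  rw [eq_dlam_of_truncGe_one_eq_dlam h le_rfl, dlam, if_pos rfl]

def dpartial (q : ℕ) (F : (ℕ → ℝ) → DOp) (t : ℕ → ℝ) : DOp :=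
  fun k n => deriv (fun τ => F (Function.update t q τ) k n) (t q)

variable {q : ℕ} {F : (ℕ → ℝ) → DOp}

theorem dpartial_dpos_apply_of_nonneg (t : ℕ → ℝ) {k : ℤ} (hk : 0 ≤ k) (n : ℤ) :
    dpartial q (fun t => dpos (F t)) t k n = dpartial q F t k n := by
  simp only [dpartial, dpos_apply_of_nonneg hk]

theorem degLE_dpartial (h : ∀ t s k, a < k → F t k = F s k) (t : ℕ → ℝ) :
    DegLE a (dpartial q F t) := fun k hk => funext fun n => by
  have : (fun τ => F (Function.update t q τ) k n) = fun _ => F t k n :=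
    funext fun τ => congrFun (h _ t k hk) n
  rw [dpartial, this, deriv_const]
  rfl

theorem DegLE.dpartial (h : ∀ t, DegLE a (F t)) (t : ℕ → ℝ) : DegLE a (dpartial q F t) :=
  degLE_dpartial (fun t s k hk => by rw [h t k hk, h s k hk]) t

theorem dpartial_dpow (hF : ∀ t, DegLE a (F t))
    (hdiff : ∀ t k n, Differentiable ℝ fun τ => F (Function.update t q τ) k n) (p : ℕ)
    (t : ℕ → ℝ) : dpartial q (fun t => dpow (F t) p) t = dpowDeriv (F t) (dpartial q F t) p := by
  funext k n
  have := hasDerivAt_dpow_apply (fun σ => hF _) (DegLE.dpartial hF t)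
    (fun k n => (hdiff t k n).differentiableAt.hasDerivAt) p k n
  rw [Function.update_eq_self] at this
  exact this.deriv

end DOp

open DOp

/-- Lax equation from the Zakharov–Shabat equations.
If `L = Λ + u₀ + ⋯` depends (coefficientwise) differentiably on the times `t_p`, `p ≥ 1`,
and the Zakharov–Shabat equations
`∂(L^q)₊/∂t_p − ∂(L^p)₊/∂t_q + [(L^q)₊, (L^p)₊] = 0` hold for every `p ≥ 1`,
then `∂L/∂t_q = [(L^q)₊, L]`. -/
theorem lax_from_zakharov_shabat (q : ℕ) (hq : 1 ≤ q)
    (L : (ℕ → ℝ) → DOp)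
    (hform : ∀ t : ℕ → ℝ, truncGe 1 (L t) = dlam)
    (hdiff : ∀ (p : ℕ), 1 ≤ p → ∀ (t : ℕ → ℝ) (k n : ℤ),
      Differentiable ℝ (fun τ => L (Function.update t p τ) k n))
    (hZS : ∀ (p : ℕ), 1 ≤ p → ∀ (t : ℕ → ℝ) (k n : ℤ),
      deriv (fun τ => dpos (dpow (L (Function.update t p τ)) q) k n) (t p)
        - deriv (fun τ => dpos (dpow (L (Function.update t q τ)) p) k n) (t q)
        + dcomm (dpos (dpow (L t) q)) (dpos (dpow (L t) p)) k n = 0) :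
    ∀ (t : ℕ → ℝ) (k n : ℤ),
      deriv (fun τ => L (Function.update t q τ) k n) (t q)
        = dcomm (dpos (dpow (L t) q)) (L t) k n := by
  have hL : ∀ t, DegLE 1 (L t) := fun t => degLE_one_of_truncGe_one_eq_dlam (hform t)
  have hP : ∀ t, DegLE q (dpos (dpow (L t) q)) := fun t => by simpa using ((hL t).dpow q).dpos
  intro t k n
  have hD : DegLE 0 (dpartial q L t) := degLE_dpartial (fun t s k hk => by
    rw [eq_dlam_of_truncGe_one_eq_dlam (hform t) hk, eq_dlam_of_truncGe_one_eq_dlam (hform s) hk]) t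
  have hC := degLE_dcomm_dpos_dpow_self (hL t) q
  have hM : ∀ p, 1 ≤ p →
      DegLE q (dpowDeriv (L t) (dpartial q L t - dcomm (dpos (dpow (L t) q)) (L t)) p) := by
    intro p hp j hj
    funext m
    have hzs : dpartial p (fun t => dpos (dpow (L t) q)) t j m
        - dpartial q (fun t => dpos (dpow (L t) p)) t j m
        + dcomm (dpos (dpow (L t) q)) (dpos (dpow (L t) p)) j m = 0 := hZS p hp t j m
    rw [congrFun ((DegLE.dpartial hP t) j hj) m, dcomm_dpos_apply (hP t) ((hL t).dpow p) hj.le,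
      dpartial_dpos_apply_of_nonneg t (by omega), dpartial_dpow hL (hdiff q hq),
      dcomm_dpow (hP t) (hL t), Pi.zero_apply] at hzs
    rw [dpowDeriv_sub (hL t) hD hC, Pi.sub_apply, Pi.sub_apply, Pi.zero_apply]
    linear_combination -hzs
  have hM0 := eq_zero_of_degLE_dpowDeriv (hL t) (apply_one_of_truncGe_one_eq_dlam (hform t))
    (hD.sub hC) hM
  exact sub_eq_zero.mp (congrFun (congrFun hM0 k) n)
end
end

section
/- Let X, Y ∈ A⁰ with all coefficient functions of X finitely supported on ℤ. Then the functions res(XY) and res(YX) are finitely supported and tr(XY) = tr(YX); equivalently, tr([X, Y]) = 0. -/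
noncomputable section

/-- if `X ∈ A⁰` has all coefficient functions finitely supported and
`Y ∈ A⁰`, then `res(XY)` and `res(YX)` are finitely supported, `tr(XY) = tr(YX)`,
and equivalently `tr([X,Y]) = 0`. -/
theorem trace_comm_zero (X Y : DOp) (hX : FinSuppOp X) (hY : IsBdd Y) :
    (Function.support (dres (dmul X Y))).Finite
    ∧ (Function.support (dres (dmul Y X))).Finite
    ∧ dtr (dmul X Y) = dtr (dmul Y X)
    ∧ dtr (dcomm X Y) = 0 := by
  classical
  set S := Function.support fun pr : ℤ × ℤ => X pr.1 pr.2 with hS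
  -- support facts
  have h1 : Function.support (dres (dmul X Y)) ⊆ Prod.snd '' S := by
    intro n hn
    simp only [Function.mem_support, dres, dmul] at hn
    have : ∃ k : ℤ, X k n * Y (0 - k) (n + k) ≠ 0 := by
      by_contra h
      push_neg at h
      exact hn (finsum_eq_zero_of_forall_eq_zero h)
    obtain ⟨k, hk⟩ := this
    exact ⟨(k, n), fun h0 => hk (by simp [h0]), rfl⟩
  have h2 : Function.support (dres (dmul Y X)) ⊆ (fun p : ℤ × ℤ => p.2 + p.1) '' S := by
    intro n hn
    simp only [Function.mem_support, dres, dmul] at hn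
    have : ∃ k : ℤ, Y k n * X (0 - k) (n + k) ≠ 0 := by
      by_contra h
      push_neg at h
      exact hn (finsum_eq_zero_of_forall_eq_zero h)
    obtain ⟨k, hk⟩ := this
    refine ⟨(0 - k, n + k), fun h0 => hk (mul_eq_zero_of_right _ h0), show (n + k) + (0 - k) = n by ring⟩
  have fin1 : (Function.support (dres (dmul X Y))).Finite :=
    (hX.image _).subset h1
  have fin2 : (Function.support (dres (dmul Y X))).Finite :=
    (hX.image _).subset h2
  -- the double-sum functions (ordered (n,k))
  set F : ℤ × ℤ → ℂ := fun p => X p.2 p.1 * Y (0 - p.2) (p.1 + p.2) with hF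
  set G : ℤ × ℤ → ℂ := fun p => Y p.2 p.1 * X (0 - p.2) (p.1 + p.2) with hG
  have hFsupp : (Function.support F).Finite := by
    apply (hX.image (Equiv.prodComm ℤ ℤ)).subset
    intro p hp
    refine ⟨(p.2, p.1), ?_, rfl⟩
    intro h0
    exact hp (by simp [hF, h0])
  -- the equivalence E(n,k) = (n+k, -k)
  set E : ℤ × ℤ ≃ ℤ × ℤ :=
    { toFun := fun p => (p.1 + p.2, -p.2)
      invFun := fun p => (p.1 + p.2, -p.2)
      left_inv := fun p => by simp
      right_inv := fun p => by simp } with hE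
  have hGE : G = F ∘ E := by
    funext p
    simp only [hF, hG, hE, Function.comp, Equiv.coe_fn_mk]
    ring_nf
  have hGsupp : (Function.support G).Finite := by
    rw [hGE]
    exact (hFsupp.preimage (E.injective.injOn)).subset (by
      intro p hp; exact hp)
  have key : dtr (dmul X Y) = dtr (dmul Y X) := by
    have e1 : dtr (dmul X Y) = ∑ᶠ p : ℤ × ℤ, F p := by
      rw [dtr]
      rw [finsum_curry F hFsupp]
      rfl
    have e2 : dtr (dmul Y X) = ∑ᶠ p : ℤ × ℤ, G p := by
      rw [dtr]
      rw [finsum_curry G hGsupp]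
      rfl
    rw [e1, e2, hGE]
    exact (finsum_comp_equiv E).symm
  refine ⟨fin1, fin2, key, ?_⟩
  have : dtr (dcomm X Y) = dtr (dmul X Y) - dtr (dmul Y X) := by
    unfold dtr dcomm
    simp only [Pi.sub_apply]
    exact finsum_sub_distrib fin1 fin2
  rw [this, key, sub_self]
end
end

section
/- Define Π, Π̃ : 𝔄 → 𝔄 by Π(X, X̄) = (X₊ + X̄₋, X₊ + X̄₋) and Π̃(X, X̄) = (X₋ − X̄₋, X̄₊ − X₊). Then: (i) the range of Π equals the diagonal subalgebra {(Z, Z) : Z ∈ A⁰}; (ii) the range of Π̃ equals {(X, X̄) ∈ 𝔄 : X = X_{<0} and X̄ = X̄_{≥0}}; (iii) 𝔄 is the direct sum of these two subspaces; (iv) both subspaces are Lie subalgebras of 𝔄 (closed under the componentwise commutator). -/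
noncomputable section

/-- The projection `Π(X,X̄) = (X₊ + X̄₋, X₊ + X̄₋)`. -/
def Pi1 (x : DOp × DOp) : DOp × DOp := (dpos x.1 + dneg x.2, dpos x.1 + dneg x.2)

/-- The projection `Π̃(X,X̄) = (X₋ − X̄₋, X̄₊ − X₊)`. -/
def Pi2 (x : DOp × DOp) : DOp × DOp := (dneg x.1 - dneg x.2, dpos x.2 - dpos x.1)

/-- The diagonal subalgebra `{(Z, Z) : Z ∈ A⁰}`. -/
def diagA : Set (DOp × DOp) := {y | ∃ Z : DOp, IsBdd Z ∧ y = (Z, Z)}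

/-- The complementary subalgebra `{(X, X̄) ∈ 𝔄 : X = X_{<0}, X̄ = X̄_{≥0}}`. -/
def offA : Set (DOp × DOp) := {y | InA y ∧ y.1 = dneg y.1 ∧ y.2 = dpos y.2}

section Helpers

lemma dpos_apply (X : DOp) (k : ℤ) : dpos X k = if 0 ≤ k then X k else 0 := by
  funext n; simp only [dpos, truncGe]; split_ifs <;> rfl

lemma dneg_apply (X : DOp) (k : ℤ) : dneg X k = if k < 0 then X k else 0 := by
  funext n; simp only [dneg, truncLt]; split_ifs <;> rfl

lemma dpos_add_dneg (X : DOp) : dpos X + dneg X = X := by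
  funext k n
  simp only [Pi.add_apply, dpos, dneg, truncGe, truncLt]
  split_ifs with h1 h2 h2 <;> first | omega | ring

lemma dpos_add (X Y : DOp) : dpos (X + Y) = dpos X + dpos Y := by
  funext k n
  simp only [Pi.add_apply, dpos, truncGe]
  split_ifs <;> ring

lemma dneg_add (X Y : DOp) : dneg (X + Y) = dneg X + dneg Y := by
  funext k n
  simp only [Pi.add_apply, dneg, truncLt]
  split_ifs <;> ring

lemma dneg_eq_self {Y : DOp} (h : ∀ k, 0 ≤ k → Y k = 0) : dneg Y = Y := by
  funext k n
  rw [dneg_apply]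
  split_ifs with h1
  · rfl
  · rw [h k (by omega)]

lemma dpos_eq_self {Y : DOp} (h : ∀ k, k < 0 → Y k = 0) : dpos Y = Y := by
  funext k n
  rw [dpos_apply]
  split_ifs with h1
  · rfl
  · rw [h k (by omega)]

lemma dneg_eq_zero {Y : DOp} (h : ∀ k, k < 0 → Y k = 0) : dneg Y = 0 := by
  funext k n
  rw [dneg_apply]
  split_ifs with h1
  · rw [h k h1]; rfl
  · rfl

lemma dpos_eq_zero {Y : DOp} (h : ∀ k, 0 ≤ k → Y k = 0) : dpos Y = 0 := by
  funext k n
  rw [dpos_apply]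
  split_ifs with h1
  · rw [h k h1]; rfl
  · rfl

lemma isBdd_dpos {X : DOp} (h : IsUpper X) : IsBdd (dpos X) := by
  obtain ⟨K, hK⟩ := h
  apply (Set.finite_Icc 0 K).subset
  intro k hk
  simp only [Set.mem_setOf_eq] at hk
  simp only [Set.mem_Icc]
  constructor
  · by_contra h0
    exact hk (by rw [dpos_apply]; simp [h0])
  · by_contra h0
    refine hk ?_
    rw [dpos_apply, hK k (by omega)]
    simp

lemma isBdd_dneg {X : DOp} (h : IsLower X) : IsBdd (dneg X) := by
  obtain ⟨K, hK⟩ := h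
  apply (Set.finite_Icc K (-1)).subset
  intro k hk
  simp only [Set.mem_setOf_eq] at hk
  simp only [Set.mem_Icc]
  constructor
  · by_contra h0
    refine hk ?_
    rw [dneg_apply, hK k (by omega)]
    simp
  · by_contra h0
    refine hk ?_
    rw [dneg_apply]
    simp only [ite_eq_right_iff]
    intro h1; omega

lemma isBdd_add {Z W : DOp} (hZ : IsBdd Z) (hW : IsBdd W) : IsBdd (Z + W) := by
  apply (hZ.union hW).subset
  intro k hk
  simp only [Set.mem_setOf_eq] at hk
  by_contra hc
  simp only [Set.mem_union, Set.mem_setOf_eq, not_or, not_not] at hc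
  exact hk (by simp [Pi.add_apply, hc.1, hc.2])

lemma isBdd_sub {Z W : DOp} (hZ : IsBdd Z) (hW : IsBdd W) : IsBdd (Z - W) := by
  apply (hZ.union hW).subset
  intro k hk
  simp only [Set.mem_setOf_eq] at hk
  by_contra hc
  simp only [Set.mem_union, Set.mem_setOf_eq, not_or, not_not] at hc
  exact hk (by simp [Pi.sub_apply, hc.1, hc.2])

lemma isBdd_upper {Z : DOp} (h : IsBdd Z) : IsUpper Z := by
  obtain ⟨K, hK⟩ := h.bddAbove
  exact ⟨K, fun k hk => by
    by_contra hc
    exact absurd (hK hc) (by omega)⟩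

lemma isBdd_lower {Z : DOp} (h : IsBdd Z) : IsLower Z := by
  obtain ⟨K, hK⟩ := h.bddBelow
  exact ⟨K, fun k hk => by
    by_contra hc
    exact absurd (hK hc) (by omega)⟩

lemma dmul_coeff_zero {Z W : DOp} {m : ℤ}
    (h : ∀ k : ℤ, Z k = 0 ∨ W (m - k) = 0) : dmul Z W m = 0 := by
  funext n
  simp only [dmul, Pi.zero_apply]
  apply finsum_eq_zero_of_forall_eq_zero
  intro k
  rcases h k with h | h <;> rw [h] <;> simp

lemma isBdd_dmul {Z W : DOp} (hZ : IsBdd Z) (hW : IsBdd W) : IsBdd (dmul Z W) := by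
  apply ((hZ.prod hW).image (fun p : ℤ × ℤ => p.1 + p.2)).subset
  intro m hm
  simp only [Set.mem_setOf_eq] at hm
  by_contra hc
  apply hm
  apply dmul_coeff_zero
  intro k
  by_contra hk
  push_neg at hk
  exact hc ⟨(k, m - k), ⟨hk.1, hk.2⟩, by simp⟩

lemma isBdd_dcomm {Z W : DOp} (hZ : IsBdd Z) (hW : IsBdd W) : IsBdd (dcomm Z W) :=
  isBdd_sub (isBdd_dmul hZ hW) (isBdd_dmul hW hZ)

lemma dmul_negsupp {U V : DOp} (hU : ∀ k, 0 ≤ k → U k = 0) (hV : ∀ k, 0 ≤ k → V k = 0) :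
    ∀ m, 0 ≤ m → dmul U V m = 0 := by
  intro m hm
  apply dmul_coeff_zero
  intro k
  rcases le_or_gt 0 k with h | h
  · exact Or.inl (hU k h)
  · exact Or.inr (hV _ (by omega))

lemma dmul_possupp {U V : DOp} (hU : ∀ k, k < 0 → U k = 0) (hV : ∀ k, k < 0 → V k = 0) :
    ∀ m, m < 0 → dmul U V m = 0 := by
  intro m hm
  apply dmul_coeff_zero
  intro k
  rcases lt_or_ge k 0 with h | h
  · exact Or.inl (hU k h)
  · exact Or.inr (hV _ (by omega))

lemma dcomm_negsupp {U V : DOp} (hU : ∀ k, 0 ≤ k → U k = 0) (hV : ∀ k, 0 ≤ k → V k = 0) :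
    ∀ m, 0 ≤ m → dcomm U V m = 0 := by
  intro m hm
  simp only [dcomm, Pi.sub_apply, dmul_negsupp hU hV m hm, dmul_negsupp hV hU m hm, sub_zero]

lemma dcomm_possupp {U V : DOp} (hU : ∀ k, k < 0 → U k = 0) (hV : ∀ k, k < 0 → V k = 0) :
    ∀ m, m < 0 → dcomm U V m = 0 := by
  intro m hm
  simp only [dcomm, Pi.sub_apply, dmul_possupp hU hV m hm, dmul_possupp hV hU m hm, sub_zero]

lemma offA_supp1 {y : DOp × DOp} (hy : y ∈ offA) : ∀ k, 0 ≤ k → y.1 k = 0 := by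
  intro k hk
  rw [hy.2.1, dneg_apply]
  simp [not_lt.mpr hk]

lemma offA_supp2 {y : DOp × DOp} (hy : y ∈ offA) : ∀ k, k < 0 → y.2 k = 0 := by
  intro k hk
  rw [hy.2.2, dpos_apply]
  simp [not_le.mpr hk]

lemma mem_offA {y : DOp × DOp} (h1 : ∀ k, 0 ≤ k → y.1 k = 0) (h2 : ∀ k, k < 0 → y.2 k = 0) :
    y ∈ offA := by
  refine ⟨⟨⟨-1, fun k hk => h1 k (by omega)⟩, ⟨0, h2⟩⟩, (dneg_eq_self h1).symm, (dpos_eq_self h2).symm⟩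

lemma Pi1_mem_diagA {x : DOp × DOp} (hx : InA x) : Pi1 x ∈ diagA := by
  exact ⟨dpos x.1 + dneg x.2, isBdd_add (isBdd_dpos hx.1) (isBdd_dneg hx.2), rfl⟩

lemma Pi2_mem_offA {x : DOp × DOp} (hx : InA x) : Pi2 x ∈ offA := by
  apply mem_offA
  · intro k hk
    show (dneg x.1 - dneg x.2) k = 0
    simp [Pi.sub_apply, dneg_apply, not_lt.mpr hk]
  · intro k hk
    show (dpos x.2 - dpos x.1) k = 0
    simp [Pi.sub_apply, dpos_apply, not_le.mpr hk]

end Helpers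

/-- (i) the range of `Π` on `𝔄` is the diagonal `{(Z,Z) : Z ∈ A⁰}`;
(ii) the range of `Π̃` on `𝔄` is `(A⁺)₋ ⊕ (A⁻)₊`; (iii) `𝔄` is the direct sum of these
two subspaces; (iv) both are Lie subalgebras (closed under the componentwise commutator). -/
theorem splitting_of_A :
    (Pi1 '' {x : DOp × DOp | InA x} = diagA)
    ∧ (Pi2 '' {x : DOp × DOp | InA x} = offA)
    ∧ (∀ x : DOp × DOp, InA x →
        ∃ a ∈ diagA, ∃ b ∈ offA, x = a + b ∧
          ∀ a' ∈ diagA, ∀ b' ∈ offA, x = a' + b' → a' = a ∧ b' = b)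
    ∧ (∀ a ∈ diagA, ∀ b ∈ diagA, pcomm a b ∈ diagA)
    ∧ (∀ a ∈ offA, ∀ b ∈ offA, pcomm a b ∈ offA) := by
  have hPi1x : ∀ x : DOp × DOp, InA x → x = Pi1 x + Pi2 x := by
    intro x hx
    have h1 : x.1 = (dpos x.1 + dneg x.2) + (dneg x.1 - dneg x.2) := by
      conv_lhs => rw [← dpos_add_dneg x.1]
      abel
    have h2 : x.2 = (dpos x.1 + dneg x.2) + (dpos x.2 - dpos x.1) := by
      conv_lhs => rw [← dpos_add_dneg x.2]
      abel
    exact Prod.ext h1 h2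
  refine ⟨?_, ?_, ?_, ?_, ?_⟩
  · -- range of Pi1
    apply Set.eq_of_subset_of_subset
    · rintro y ⟨x, hx, rfl⟩
      exact Pi1_mem_diagA hx
    · rintro y ⟨Z, hZ, rfl⟩
      refine ⟨(Z, Z), ⟨isBdd_upper hZ, isBdd_lower hZ⟩, ?_⟩
      have : dpos Z + dneg Z = Z := dpos_add_dneg Z
      simp only [Pi1, this]
  · -- range of Pi2
    apply Set.eq_of_subset_of_subset
    · rintro y ⟨x, hx, rfl⟩
      exact Pi2_mem_offA hx
    · rintro y hy
      refine ⟨y, hy.1, ?_⟩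
      have h1 : dneg y.1 = y.1 := hy.2.1.symm
      have h2 : dpos y.2 = y.2 := hy.2.2.symm
      have h3 : dneg y.2 = 0 := dneg_eq_zero (offA_supp2 hy)
      have h4 : dpos y.1 = 0 := dpos_eq_zero (offA_supp1 hy)
      simp only [Pi2, h1, h2, h3, h4, sub_zero]
  · -- direct sum
    intro x hx
    refine ⟨Pi1 x, Pi1_mem_diagA hx, Pi2 x, Pi2_mem_offA hx, hPi1x x hx, ?_⟩
    rintro a' ⟨Z', hZ', rfl⟩ b' hb' hxab
    have hB1 : dpos b'.1 = 0 := dpos_eq_zero (offA_supp1 hb')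
    have hB2 : dneg b'.2 = 0 := dneg_eq_zero (offA_supp2 hb')
    have hx1 : x.1 = Z' + b'.1 := by rw [hxab]; rfl
    have hx2 : x.2 = Z' + b'.2 := by rw [hxab]; rfl
    have hZeq : dpos x.1 + dneg x.2 = Z' := by
      rw [hx1, hx2, dpos_add, dneg_add, hB1, hB2, add_zero, add_zero, dpos_add_dneg]
    have ha : (Z', Z') = Pi1 x := by
      simp only [Pi1, hZeq]
    refine ⟨ha, ?_⟩
    have h5 := hxab.symm.trans (hPi1x x hx)
    rw [ha] at h5
    exact add_left_cancel h5
  · -- diag Lie closure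
    rintro a ⟨Z, hZ, rfl⟩ b ⟨W, hW, rfl⟩
    exact ⟨dcomm Z W, isBdd_dcomm hZ hW, rfl⟩
  · -- off Lie closure
    intro a ha b hb
    apply mem_offA
    · exact fun k hk => dcomm_negsupp (offA_supp1 ha) (offA_supp1 hb) k hk
    · exact fun k hk => dcomm_possupp (offA_supp2 ha) (offA_supp2 hb) k hk
end
end

section
/- Let g be a Lie algebra over a commutative ring which decomposes as a direct sum of submodules g = g₁ ⊕ g₂, where g₁ and g₂ are both Lie subalgebras of g. Let π₁ and π₂ be the projections onto g₁ and g₂ determined by this decomposition. Then the linear map R := π₁ − π₂ satisfies the modified Yang–Baxter equation: [R(X), R(Y)] − R([R(X), Y] + [X, R(Y)]) = −[X, Y] for all X, Y ∈ g. -/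
/-- if a Lie algebra `g` over a commutative ring decomposes as a direct
sum of submodules `g = g₁ ⊕ g₂` which are both Lie subalgebras, and `π₁`, `π₂` are the
projections determined by the decomposition, then `R := π₁ − π₂` satisfies the modified
Yang–Baxter equation `[R X, R Y] − R([R X, Y] + [X, R Y]) = −[X, Y]`. -/
theorem splitting_modified_yang_baxter {R : Type*} {g : Type*}
    [CommRing R] [LieRing g] [LieAlgebra R g]
    (g₁ g₂ : Submodule R g) (hcompl : IsCompl g₁ g₂)
    (hsub₁ : ∀ x y : g, x ∈ g₁ → y ∈ g₁ → ⁅x, y⁆ ∈ g₁)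
    (hsub₂ : ∀ x y : g, x ∈ g₂ → y ∈ g₂ → ⁅x, y⁆ ∈ g₂)
    (π₁ π₂ : g →ₗ[R] g)
    (hπ₁ : ∀ x : g, π₁ x ∈ g₁) (hπ₂ : ∀ x : g, π₂ x ∈ g₂)
    (hsum : ∀ x : g, π₁ x + π₂ x = x) :
    ∀ X Y : g,
      ⁅(π₁ - π₂) X, (π₁ - π₂) Y⁆
          - (π₁ - π₂) (⁅(π₁ - π₂) X, Y⁆ + ⁅X, (π₁ - π₂) Y⁆)
        = -⁅X, Y⁆ := by
  have hdisj : ∀ z : g, z ∈ g₁ → z ∈ g₂ → z = 0 := fun z h1 h2 =>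
    Submodule.disjoint_def.mp hcompl.disjoint z h1 h2
  have key₁ : ∀ z : g, z ∈ g₁ → π₁ z = z ∧ π₂ z = 0 := by
    intro z hz
    have h2 : π₂ z ∈ g₁ := by
      have : π₂ z = z - π₁ z := by
        rw [eq_sub_iff_add_eq, add_comm]; exact hsum z
      rw [this]; exact Submodule.sub_mem _ hz (hπ₁ z)
    have hz0 : π₂ z = 0 := hdisj _ h2 (hπ₂ z)
    constructor
    · have := hsum z; rw [hz0, add_zero] at this; exact this
    · exact hz0
  have key₂ : ∀ z : g, z ∈ g₂ → π₁ z = 0 ∧ π₂ z = z := by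
    intro z hz
    have h1 : π₁ z ∈ g₂ := by
      have : π₁ z = z - π₂ z := by
        rw [eq_sub_iff_add_eq]; exact hsum z
      rw [this]; exact Submodule.sub_mem _ hz (hπ₂ z)
    have hz0 : π₁ z = 0 := hdisj _ (hπ₁ z) h1
    constructor
    · exact hz0
    · have := hsum z; rw [hz0, zero_add] at this; exact this
  intro X Y
  set a := π₁ X with ha
  set b := π₂ X with hb
  set c := π₁ Y with hc
  set d := π₂ Y with hd
  have hX : a + b = X := hsum X
  have hY : c + d = Y := hsum Y
  have hac : (π₁ - π₂) ⁅a, c⁆ = ⁅a, c⁆ := by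
    have h := key₁ ⁅a, c⁆ (hsub₁ a c (hπ₁ X) (hπ₁ Y))
    simp [LinearMap.sub_apply, h.1, h.2]
  have hbd : (π₁ - π₂) ⁅b, d⁆ = -⁅b, d⁆ := by
    have h := key₂ ⁅b, d⁆ (hsub₂ b d (hπ₂ X) (hπ₂ Y))
    simp [LinearMap.sub_apply, h.1, h.2]
  have hRX : (π₁ - π₂) X = a - b := rfl
  have hRY : (π₁ - π₂) Y = c - d := rfl
  have harg : ⁅a - b, Y⁆ + ⁅X, c - d⁆ = (2 : ℤ) • ⁅a, c⁆ - (2 : ℤ) • ⁅b, d⁆ := by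
    rw [← hX, ← hY]
    simp only [lie_add, add_lie, lie_sub, sub_lie]
    abel
  rw [hRX, hRY, harg, map_sub, map_zsmul, map_zsmul, hac, hbd, ← hX, ← hY]
  simp only [lie_add, add_lie, lie_sub, sub_lie, smul_neg]
  abel
end

section
/- The linear map R : 𝔄 → 𝔄 defined by R(X, X̄) = (X₊ − X₋ + 2X̄₋, X̄₋ − X̄₊ + 2X₊) satisfies the modified Yang–Baxter equation: for all x, y ∈ 𝔄, [R(x), R(y)] − R([R(x), y] + [x, R(y)]) = −[x, y]. -/
noncomputable section

/-- The R-matrix `R(X,X̄) = (X₊ − X₋ + 2X̄₋, X̄₋ − X̄₊ + 2X₊)`. -/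
def Rmat (x : DOp × DOp) : DOp × DOp :=
  (dpos x.1 - dneg x.1 + (2 : ℂ) • dneg x.2,
   dneg x.2 - dpos x.2 + (2 : ℂ) • dpos x.1)

/-! ### Auxiliary lemmas -/

lemma isUpper_add {X Y : DOp} (hX : IsUpper X) (hY : IsUpper Y) : IsUpper (X + Y) := by
  obtain ⟨K, hK⟩ := hX; obtain ⟨L, hL⟩ := hY
  refine ⟨max K L, fun k hk => ?_⟩
  funext n
  have h1 := congrFun (hK k (lt_of_le_of_lt (le_max_left K L) hk)) n
  have h2 := congrFun (hL k (lt_of_le_of_lt (le_max_right K L) hk)) n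
  show X k n + Y k n = 0
  simp only [Pi.zero_apply] at h1 h2
  rw [h1, h2, add_zero]

lemma isUpper_neg {X : DOp} (hX : IsUpper X) : IsUpper (-X) := by
  obtain ⟨K, hK⟩ := hX
  refine ⟨K, fun k hk => ?_⟩
  funext n
  have h1 := congrFun (hK k hk) n
  simp only [Pi.zero_apply] at h1
  show -(X k n) = 0
  rw [h1, neg_zero]

lemma isUpper_sub {X Y : DOp} (hX : IsUpper X) (hY : IsUpper Y) : IsUpper (X - Y) := by
  rw [sub_eq_add_neg]; exact isUpper_add hX (isUpper_neg hY)

lemma isLower_add {X Y : DOp} (hX : IsLower X) (hY : IsLower Y) : IsLower (X + Y) := by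
  obtain ⟨K, hK⟩ := hX; obtain ⟨L, hL⟩ := hY
  refine ⟨min K L, fun k hk => ?_⟩
  funext n
  have h1 := congrFun (hK k (lt_of_lt_of_le hk (min_le_left K L))) n
  have h2 := congrFun (hL k (lt_of_lt_of_le hk (min_le_right K L))) n
  show X k n + Y k n = 0
  simp only [Pi.zero_apply] at h1 h2
  rw [h1, h2, add_zero]

lemma isLower_neg {X : DOp} (hX : IsLower X) : IsLower (-X) := by
  obtain ⟨K, hK⟩ := hX
  refine ⟨K, fun k hk => ?_⟩
  funext n
  have h1 := congrFun (hK k hk) n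
  simp only [Pi.zero_apply] at h1
  show -(X k n) = 0
  rw [h1, neg_zero]

lemma isLower_sub {X Y : DOp} (hX : IsLower X) (hY : IsLower Y) : IsLower (X - Y) := by
  rw [sub_eq_add_neg]; exact isLower_add hX (isLower_neg hY)

lemma isUpper_dneg (X : DOp) : IsUpper (dneg X) := by
  refine ⟨-1, fun k hk => ?_⟩
  funext n
  simp only [dneg, truncLt]
  rw [if_neg (by omega)]
  rfl

lemma isLower_dpos (X : DOp) : IsLower (dpos X) := by
  refine ⟨0, fun k hk => ?_⟩
  funext n
  simp only [dpos, truncGe]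
  rw [if_neg (by omega)]
  rfl

lemma isUpper_dpos {X : DOp} (hX : IsUpper X) : IsUpper (dpos X) := by
  obtain ⟨K, hK⟩ := hX
  refine ⟨K, fun k hk => ?_⟩
  funext n
  have h1 := congrFun (hK k hk) n
  simp only [Pi.zero_apply] at h1
  simp only [dpos, truncGe, h1, ite_self]
  rfl

lemma isLower_dneg {X : DOp} (hX : IsLower X) : IsLower (dneg X) := by
  obtain ⟨K, hK⟩ := hX
  refine ⟨K, fun k hk => ?_⟩
  funext n
  have h1 := congrFun (hK k hk) n
  simp only [Pi.zero_apply] at h1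
  simp only [dneg, truncLt, h1, ite_self]
  rfl

lemma inA_add {u v : DOp × DOp} (hu : InA u) (hv : InA v) : InA (u + v) :=
  ⟨isUpper_add hu.1 hv.1, isLower_add hu.2 hv.2⟩

lemma inA_neg {u : DOp × DOp} (hu : InA u) : InA (-u) :=
  ⟨isUpper_neg hu.1, isLower_neg hu.2⟩

lemma inA_sub {u v : DOp × DOp} (hu : InA u) (hv : InA v) : InA (u - v) :=
  ⟨isUpper_sub hu.1 hv.1, isLower_sub hu.2 hv.2⟩

/-- Finiteness of the convolution support for two upper operators. -/
lemma supp_fin_upper {X Y : DOp} (hX : IsUpper X) (hY : IsUpper Y) (m n : ℤ) :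
    (Function.support fun k : ℤ => X k n * Y (m - k) (n + k)).Finite := by
  obtain ⟨K, hK⟩ := hX; obtain ⟨L, hL⟩ := hY
  refine Set.Finite.subset (Set.finite_Icc (m - L) K) ?_
  intro k hk
  simp only [Function.mem_support] at hk
  simp only [Set.mem_Icc]
  constructor
  · by_contra h
    push_neg at h
    have h1 := congrFun (hL (m - k) (by omega)) (n + k)
    simp only [Pi.zero_apply] at h1
    rw [h1, mul_zero] at hk
    exact hk rfl
  · by_contra h
    push_neg at h
    have h1 := congrFun (hK k (by omega)) n
    simp only [Pi.zero_apply] at h1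
    rw [h1, zero_mul] at hk
    exact hk rfl

/-- Finiteness of the convolution support for two lower operators. -/
lemma supp_fin_lower {X Y : DOp} (hX : IsLower X) (hY : IsLower Y) (m n : ℤ) :
    (Function.support fun k : ℤ => X k n * Y (m - k) (n + k)).Finite := by
  obtain ⟨K, hK⟩ := hX; obtain ⟨L, hL⟩ := hY
  refine Set.Finite.subset (Set.finite_Icc K (m - L)) ?_
  intro k hk
  simp only [Function.mem_support] at hk
  simp only [Set.mem_Icc]
  constructor
  · by_contra h
    push_neg at h
    have h1 := congrFun (hK k (by omega)) n
    simp only [Pi.zero_apply] at h1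
    rw [h1, zero_mul] at hk
    exact hk rfl
  · by_contra h
    push_neg at h
    have h1 := congrFun (hL (m - k) (by omega)) (n + k)
    simp only [Pi.zero_apply] at h1
    rw [h1, mul_zero] at hk
    exact hk rfl

lemma dmul_add_left' {X Y Z : DOp}
    (h1 : ∀ m n : ℤ, (Function.support fun k : ℤ => X k n * Z (m - k) (n + k)).Finite)
    (h2 : ∀ m n : ℤ, (Function.support fun k : ℤ => Y k n * Z (m - k) (n + k)).Finite) :
    dmul (X + Y) Z = dmul X Z + dmul Y Z := by
  funext m n
  show (∑ᶠ k : ℤ, (X k n + Y k n) * Z (m - k) (n + k)) = _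
  simp only [add_mul]
  rw [finsum_add_distrib (h1 m n) (h2 m n)]
  rfl

lemma dmul_add_right' {X Y Z : DOp}
    (h1 : ∀ m n : ℤ, (Function.support fun k : ℤ => X k n * Y (m - k) (n + k)).Finite)
    (h2 : ∀ m n : ℤ, (Function.support fun k : ℤ => X k n * Z (m - k) (n + k)).Finite) :
    dmul X (Y + Z) = dmul X Y + dmul X Z := by
  funext m n
  show (∑ᶠ k : ℤ, X k n * (Y (m - k) (n + k) + Z (m - k) (n + k))) = _
  simp only [mul_add]
  rw [finsum_add_distrib (h1 m n) (h2 m n)]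
  rfl

lemma dmul_neg_left (X Z : DOp) : dmul (-X) Z = -(dmul X Z) := by
  funext m n
  show (∑ᶠ k : ℤ, (-(X k n)) * Z (m - k) (n + k)) = -(∑ᶠ k : ℤ, X k n * Z (m - k) (n + k))
  simp only [neg_mul]
  exact finsum_neg_distrib _

lemma dmul_neg_right (X Z : DOp) : dmul X (-Z) = -(dmul X Z) := by
  funext m n
  show (∑ᶠ k : ℤ, X k n * (-(Z (m - k) (n + k)))) = -(∑ᶠ k : ℤ, X k n * Z (m - k) (n + k))
  simp only [mul_neg]
  exact finsum_neg_distrib _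

lemma dcomm_add_left_u {X Y Z : DOp} (hX : IsUpper X) (hY : IsUpper Y) (hZ : IsUpper Z) :
    dcomm (X + Y) Z = dcomm X Z + dcomm Y Z := by
  unfold dcomm
  rw [dmul_add_left' (supp_fin_upper hX hZ) (supp_fin_upper hY hZ),
    dmul_add_right' (supp_fin_upper hZ hX) (supp_fin_upper hZ hY)]
  abel

lemma dcomm_add_left_l {X Y Z : DOp} (hX : IsLower X) (hY : IsLower Y) (hZ : IsLower Z) :
    dcomm (X + Y) Z = dcomm X Z + dcomm Y Z := by
  unfold dcomm
  rw [dmul_add_left' (supp_fin_lower hX hZ) (supp_fin_lower hY hZ),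
    dmul_add_right' (supp_fin_lower hZ hX) (supp_fin_lower hZ hY)]
  abel

lemma dcomm_add_right_u {X Y Z : DOp} (hX : IsUpper X) (hY : IsUpper Y) (hZ : IsUpper Z) :
    dcomm X (Y + Z) = dcomm X Y + dcomm X Z := by
  unfold dcomm
  rw [dmul_add_right' (supp_fin_upper hX hY) (supp_fin_upper hX hZ),
    dmul_add_left' (supp_fin_upper hY hX) (supp_fin_upper hZ hX)]
  abel

lemma dcomm_add_right_l {X Y Z : DOp} (hX : IsLower X) (hY : IsLower Y) (hZ : IsLower Z) :
    dcomm X (Y + Z) = dcomm X Y + dcomm X Z := by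
  unfold dcomm
  rw [dmul_add_right' (supp_fin_lower hX hY) (supp_fin_lower hX hZ),
    dmul_add_left' (supp_fin_lower hY hX) (supp_fin_lower hZ hX)]
  abel

lemma dcomm_neg_left (X Z : DOp) : dcomm (-X) Z = -(dcomm X Z) := by
  unfold dcomm
  rw [dmul_neg_left, dmul_neg_right]
  abel

lemma dcomm_neg_right (X Z : DOp) : dcomm X (-Z) = -(dcomm X Z) := by
  unfold dcomm
  rw [dmul_neg_left, dmul_neg_right]
  abel

lemma pcomm_add_left {u v w : DOp × DOp} (hu : InA u) (hv : InA v) (hw : InA w) :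
    pcomm (u + v) w = pcomm u w + pcomm v w := by
  unfold pcomm
  have h1 : (u + v).1 = u.1 + v.1 := rfl
  have h2 : (u + v).2 = u.2 + v.2 := rfl
  rw [h1, h2, dcomm_add_left_u hu.1 hv.1 hw.1, dcomm_add_left_l hu.2 hv.2 hw.2]
  rfl

lemma pcomm_add_right {u v w : DOp × DOp} (hu : InA u) (hv : InA v) (hw : InA w) :
    pcomm u (v + w) = pcomm u v + pcomm u w := by
  unfold pcomm
  have h1 : (v + w).1 = v.1 + w.1 := rfl
  have h2 : (v + w).2 = v.2 + w.2 := rfl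
  rw [h1, h2, dcomm_add_right_u hu.1 hv.1 hw.1, dcomm_add_right_l hu.2 hv.2 hw.2]
  rfl

lemma pcomm_neg_left (u w : DOp × DOp) : pcomm (-u) w = -(pcomm u w) := by
  unfold pcomm
  have h1 : (-u).1 = -(u.1) := rfl
  have h2 : (-u).2 = -(u.2) := rfl
  rw [h1, h2, dcomm_neg_left, dcomm_neg_left]
  rfl

lemma pcomm_neg_right (u w : DOp × DOp) : pcomm u (-w) = -(pcomm u w) := by
  unfold pcomm
  have h1 : (-w).1 = -(w.1) := rfl
  have h2 : (-w).2 = -(w.2) := rfl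
  rw [h1, h2, dcomm_neg_right, dcomm_neg_right]
  rfl

lemma pcomm_sub_left {u v w : DOp × DOp} (hu : InA u) (hv : InA v) (hw : InA w) :
    pcomm (u - v) w = pcomm u w - pcomm v w := by
  rw [sub_eq_add_neg, pcomm_add_left hu (inA_neg hv) hw, pcomm_neg_left, sub_eq_add_neg]

lemma pcomm_sub_right {u v w : DOp × DOp} (hu : InA u) (hv : InA v) (hw : InA w) :
    pcomm u (v - w) = pcomm u v - pcomm u w := by
  rw [sub_eq_add_neg, pcomm_add_right hu hv (inA_neg hw), pcomm_neg_right, sub_eq_add_neg]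

/-- Products of strictly-negative-degree operators have strictly negative degree. -/
lemma dmul_negdeg {X Y : DOp} (hX : ∀ k : ℤ, 0 ≤ k → X k = 0) (hY : ∀ k : ℤ, 0 ≤ k → Y k = 0) :
    ∀ m : ℤ, 0 ≤ m → dmul X Y m = 0 := by
  intro m hm
  funext n
  show (∑ᶠ k : ℤ, X k n * Y (m - k) (n + k)) = 0
  apply finsum_eq_zero_of_forall_eq_zero
  intro k
  rcases le_or_gt 0 k with h | h
  · have h1 := congrFun (hX k h) n
    simp only [Pi.zero_apply] at h1
    rw [h1, zero_mul]
  · have h1 := congrFun (hY (m - k) (by omega)) (n + k)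
    simp only [Pi.zero_apply] at h1
    rw [h1, mul_zero]

/-- Products of nonnegative-degree operators have nonnegative degree. -/
lemma dmul_posdeg {X Y : DOp} (hX : ∀ k : ℤ, k < 0 → X k = 0) (hY : ∀ k : ℤ, k < 0 → Y k = 0) :
    ∀ m : ℤ, m < 0 → dmul X Y m = 0 := by
  intro m hm
  funext n
  show (∑ᶠ k : ℤ, X k n * Y (m - k) (n + k)) = 0
  apply finsum_eq_zero_of_forall_eq_zero
  intro k
  rcases lt_or_ge k 0 with h | h
  · have h1 := congrFun (hX k h) n
    simp only [Pi.zero_apply] at h1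
    rw [h1, zero_mul]
  · have h1 := congrFun (hY (m - k) (by omega)) (n + k)
    simp only [Pi.zero_apply] at h1
    rw [h1, mul_zero]

lemma dcomm_negdeg {X Y : DOp} (hX : ∀ k : ℤ, 0 ≤ k → X k = 0) (hY : ∀ k : ℤ, 0 ≤ k → Y k = 0) :
    ∀ m : ℤ, 0 ≤ m → dcomm X Y m = 0 := by
  intro m hm
  show dmul X Y m - dmul Y X m = 0
  rw [dmul_negdeg hX hY m hm, dmul_negdeg hY hX m hm, sub_zero]

lemma dcomm_posdeg {X Y : DOp} (hX : ∀ k : ℤ, k < 0 → X k = 0) (hY : ∀ k : ℤ, k < 0 → Y k = 0) :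
    ∀ m : ℤ, m < 0 → dcomm X Y m = 0 := by
  intro m hm
  show dmul X Y m - dmul Y X m = 0
  rw [dmul_posdeg hX hY m hm, dmul_posdeg hY hX m hm, sub_zero]

/-- `R` fixes diagonal pairs. -/
lemma Rmat_diag (D : DOp) : Rmat (D, D) = (D, D) := by
  unfold Rmat
  refine Prod.ext ?_ ?_
  all_goals
    funext k n
    simp only [dpos, dneg, truncGe, truncLt, Pi.add_apply, Pi.sub_apply, Pi.smul_apply,
      smul_eq_mul]
    split_ifs <;> first | ring1 | (exfalso; omega)

/-- `R` acts as `-1` on pairs whose first component has strictly negative degree and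
whose second has nonnegative degree. -/
lemma Rmat_gc {u : DOp × DOp} (h1 : ∀ k : ℤ, 0 ≤ k → u.1 k = 0)
    (h2 : ∀ k : ℤ, k < 0 → u.2 k = 0) : Rmat u = -u := by
  unfold Rmat
  refine Prod.ext ?_ ?_
  · funext k n
    simp only [dpos, dneg, truncGe, truncLt, Pi.add_apply, Pi.sub_apply, Pi.smul_apply,
      smul_eq_mul, Prod.fst_neg, Pi.neg_apply]
    rcases le_or_gt 0 k with h | h
    · have e1 := congrFun (h1 k h) n
      simp only [Pi.zero_apply] at e1
      rw [if_pos h, if_neg (by omega), if_neg (by omega), e1]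
      ring
    · have e2 := congrFun (h2 k h) n
      rw [if_neg (by omega), if_pos h, if_pos h]
      simp only [Pi.zero_apply] at e2
      rw [e2]
      ring
  · funext k n
    simp only [dpos, dneg, truncGe, truncLt, Pi.add_apply, Pi.sub_apply, Pi.smul_apply,
      smul_eq_mul, Prod.snd_neg, Pi.neg_apply]
    rcases le_or_gt 0 k with h | h
    · have e1 := congrFun (h1 k h) n
      simp only [Pi.zero_apply] at e1
      rw [if_neg (by omega), if_pos h, if_pos h, e1]
      ring
    · have e2 := congrFun (h2 k h) n
      simp only [Pi.zero_apply] at e2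
      rw [if_pos h, if_neg (by omega), if_neg (by omega), e2]
      ring

lemma Rmat_add (u v : DOp × DOp) : Rmat (u + v) = Rmat u + Rmat v := by
  unfold Rmat
  refine Prod.ext ?_ ?_
  all_goals
    funext k n
    simp only [dpos, dneg, truncGe, truncLt, Prod.fst_add, Prod.snd_add, Pi.add_apply,
      Pi.sub_apply, Pi.smul_apply, smul_eq_mul]
    split_ifs <;> ring

lemma Rmat_neg (u : DOp × DOp) : Rmat (-u) = -Rmat u := by
  unfold Rmat
  refine Prod.ext ?_ ?_
  all_goals
    funext k n
    simp only [dpos, dneg, truncGe, truncLt, Prod.fst_neg, Prod.snd_neg, Pi.neg_apply,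
      Pi.add_apply, Pi.sub_apply, Pi.smul_apply, smul_eq_mul]
    split_ifs <;> ring

lemma Rmat_sub (u v : DOp × DOp) : Rmat (u - v) = Rmat u - Rmat v := by
  rw [sub_eq_add_neg, Rmat_add, Rmat_neg, sub_eq_add_neg]

/-- Decomposition of an element of `𝔄` into its diagonal and complementary parts. -/
lemma decomp (x : DOp × DOp) (hx : InA x) :
    ∃ a b : DOp × DOp, x = a + b ∧ Rmat x = a - b ∧ InA a ∧ InA b ∧ a.1 = a.2 ∧
      (∀ k : ℤ, 0 ≤ k → b.1 k = 0) ∧ (∀ k : ℤ, k < 0 → b.2 k = 0) := by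
  refine ⟨(dpos x.1 + dneg x.2, dpos x.1 + dneg x.2),
    (dneg x.1 - dneg x.2, dpos x.2 - dpos x.1), ?_, ?_, ?_, ?_, rfl, ?_, ?_⟩
  · refine Prod.ext ?_ ?_
    all_goals
      funext k n
      simp only [dpos, dneg, truncGe, truncLt, Prod.fst_add, Prod.snd_add, Pi.add_apply,
        Pi.sub_apply]
      split_ifs <;> first | ring1 | (exfalso; omega)
  · unfold Rmat
    refine Prod.ext ?_ ?_
    all_goals
      funext k n
      simp only [dpos, dneg, truncGe, truncLt, Prod.fst_sub, Prod.snd_sub, Pi.add_apply,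
        Pi.sub_apply, Pi.smul_apply, smul_eq_mul]
      split_ifs <;> first | ring1 | (exfalso; omega)
  · exact ⟨isUpper_add (isUpper_dpos hx.1) (isUpper_dneg x.2),
      isLower_add (isLower_dpos x.1) (isLower_dneg hx.2)⟩
  · exact ⟨isUpper_sub (isUpper_dneg x.1) (isUpper_dneg x.2),
      isLower_sub (isLower_dpos x.2) (isLower_dpos x.1)⟩
  · intro k hk
    funext n
    simp only [Pi.sub_apply, dneg, truncLt]
    rw [if_neg (by omega), if_neg (by omega)]
    simp
  · intro k hk
    funext n
    simp only [Pi.sub_apply, dpos, truncGe]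
    rw [if_neg (by omega), if_neg (by omega)]
    simp

/-- The abstract Adler–Kostant–Symes computation. -/
lemma aks (a b c d : DOp × DOp) (ha : InA a) (hb : InA b) (hc : InA c) (hd : InA d)
    (hadiag : a.1 = a.2) (hcdiag : c.1 = c.2)
    (hb1 : ∀ k : ℤ, 0 ≤ k → b.1 k = 0) (hb2 : ∀ k : ℤ, k < 0 → b.2 k = 0)
    (hd1 : ∀ k : ℤ, 0 ≤ k → d.1 k = 0) (hd2 : ∀ k : ℤ, k < 0 → d.2 k = 0) :
    pcomm (a - b) (c - d) - Rmat (pcomm (a - b) (c + d) + pcomm (a + b) (c - d))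
      = -pcomm (a + b) (c + d) := by
  have E1 : pcomm (a - b) (c - d) = pcomm a c - pcomm a d - (pcomm b c - pcomm b d) := by
    rw [pcomm_sub_left ha hb (inA_sub hc hd), pcomm_sub_right ha hc hd,
      pcomm_sub_right hb hc hd]
  have E2 : pcomm (a - b) (c + d) = pcomm a c + pcomm a d - (pcomm b c + pcomm b d) := by
    rw [pcomm_sub_left ha hb (inA_add hc hd), pcomm_add_right ha hc hd,
      pcomm_add_right hb hc hd]
  have E3 : pcomm (a + b) (c - d) = pcomm a c - pcomm a d + (pcomm b c - pcomm b d) := by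
    rw [pcomm_add_left ha hb (inA_sub hc hd), pcomm_sub_right ha hc hd,
      pcomm_sub_right hb hc hd]
  have E4 : pcomm (a + b) (c + d) = pcomm a c + pcomm a d + (pcomm b c + pcomm b d) := by
    rw [pcomm_add_left ha hb (inA_add hc hd), pcomm_add_right ha hc hd,
      pcomm_add_right hb hc hd]
  have harg : pcomm a c + pcomm a d - (pcomm b c + pcomm b d)
      + (pcomm a c - pcomm a d + (pcomm b c - pcomm b d))
      = (pcomm a c + pcomm a c) - (pcomm b d + pcomm b d) := by abel
  have hfix : Rmat (pcomm a c) = pcomm a c := by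
    show Rmat (dcomm a.1 c.1, dcomm a.2 c.2) = (dcomm a.1 c.1, dcomm a.2 c.2)
    rw [hadiag, hcdiag]
    exact Rmat_diag _
  have hflip : Rmat (pcomm b d) = -pcomm b d := by
    refine Rmat_gc ?_ ?_
    · exact fun k hk => dcomm_negdeg hb1 hd1 k hk
    · exact fun k hk => dcomm_posdeg hb2 hd2 k hk
  rw [E1, E2, E3, harg, Rmat_sub, Rmat_add, Rmat_add, hfix, hflip, E4]
  abel

/-- `R` satisfies the modified Yang–Baxter equation on `𝔄`. -/
theorem Rmat_modified_yang_baxter :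
    ∀ x y : DOp × DOp, InA x → InA y →
      pcomm (Rmat x) (Rmat y) - Rmat (pcomm (Rmat x) y + pcomm x (Rmat y))
        = -pcomm x y := by
  intro x y hx hy
  obtain ⟨a, b, hxab, hRx, ha, hb, hadiag, hb1, hb2⟩ := decomp x hx
  obtain ⟨c, d, hycd, hRy, hc, hd, hcdiag, hd1, hd2⟩ := decomp y hy
  rw [hRx, hRy, hxab, hycd]
  exact aks a b c d ha hb hc hd hadiag hcdiag hb1 hb2 hd1 hd2
end
end

section
/- Let g be a Lie algebra over a commutative ring and let R : g → g be a linear map satisfying the modified Yang–Baxter equation. Then the bracket [X, Y]_R := [R(X), Y] + [X, R(Y)] is bilinear, alternating, and satisfies the Jacobi identity; i.e., (g, [·,·]_R) is a Lie algebra. -/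
/-- The bracket `[X,Y]_R := [R X, Y] + [X, R Y]` associated to a linear map `R`. -/
def brR {R : Type*} {g : Type*} [CommRing R] [LieRing g] [LieAlgebra R g]
    (Rm : g →ₗ[R] g) (X Y : g) : g := ⁅Rm X, Y⁆ + ⁅X, Rm Y⁆

/-- if a linear map `R` on a Lie algebra `g` over a commutative ring
satisfies the modified Yang–Baxter equation, then `[·,·]_R` is bilinear, alternating and
satisfies the Jacobi identity, i.e. `(g, [·,·]_R)` is a Lie algebra. -/
theorem mYB_gives_lie_bracket {R : Type*} {g : Type*}
    [CommRing R] [LieRing g] [LieAlgebra R g]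
    (Rm : g →ₗ[R] g)
    (hmyb : ∀ X Y : g, ⁅Rm X, Rm Y⁆ - Rm (⁅Rm X, Y⁆ + ⁅X, Rm Y⁆) = -⁅X, Y⁆) :
    (∀ X Y Z : g, brR Rm (X + Y) Z = brR Rm X Z + brR Rm Y Z)
    ∧ (∀ X Y Z : g, brR Rm X (Y + Z) = brR Rm X Y + brR Rm X Z)
    ∧ (∀ (c : R) (X Y : g), brR Rm (c • X) Y = c • brR Rm X Y)
    ∧ (∀ (c : R) (X Y : g), brR Rm X (c • Y) = c • brR Rm X Y)
    ∧ (∀ X : g, brR Rm X X = 0)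
    ∧ (∀ X Y Z : g,
        brR Rm (brR Rm X Y) Z + brR Rm (brR Rm Y Z) X + brR Rm (brR Rm Z X) Y = 0) := by
  have hR : ∀ X Y : g, Rm (⁅Rm X, Y⁆ + ⁅X, Rm Y⁆) = ⁅Rm X, Rm Y⁆ + ⁅X, Y⁆ := by
    intro X Y
    have h := hmyb X Y
    rw [sub_eq_iff_eq_add] at h
    rw [h]; abel
  have jac : ∀ a b c : g, ⁅⁅a, b⁆, c⁆ + ⁅⁅b, c⁆, a⁆ + ⁅⁅c, a⁆, b⁆ = 0 := by
    intro a b c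
    rw [← lie_skew ⁅a, b⁆ c, ← lie_skew ⁅b, c⁆ a, ← lie_skew ⁅c, a⁆ b]
    have h : -(⁅a, ⁅b, c⁆⁆ + ⁅b, ⁅c, a⁆⁆ + ⁅c, ⁅a, b⁆⁆) = 0 := by
      rw [lie_jacobi]; simp
    rw [← h]; abel
  refine ⟨?_, ?_, ?_, ?_, ?_, ?_⟩
  · intro X Y Z; simp [brR, add_lie, lie_add]; abel
  · intro X Y Z; simp [brR, add_lie, lie_add]; abel
  · intro c X Y; simp [brR, smul_lie, lie_smul, smul_add]
  · intro c X Y; simp [brR, smul_lie, lie_smul, smul_add]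
  · intro X
    show ⁅Rm X, X⁆ + ⁅X, Rm X⁆ = 0
    rw [← lie_skew]; abel
  · intro X Y Z
    have k1 := jac X Y Z
    have k2 := jac (Rm X) (Rm Y) Z
    have k3 := jac (Rm X) Y (Rm Z)
    have k4 := jac X (Rm Y) (Rm Z)
    have expand : brR Rm (brR Rm X Y) Z + brR Rm (brR Rm Y Z) X + brR Rm (brR Rm Z X) Y =
        (⁅⁅X, Y⁆, Z⁆ + ⁅⁅Y, Z⁆, X⁆ + ⁅⁅Z, X⁆, Y⁆)
        + (⁅⁅Rm X, Rm Y⁆, Z⁆ + ⁅⁅Rm Y, Z⁆, Rm X⁆ + ⁅⁅Z, Rm X⁆, Rm Y⁆)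
        + (⁅⁅Rm X, Y⁆, Rm Z⁆ + ⁅⁅Y, Rm Z⁆, Rm X⁆ + ⁅⁅Rm Z, Rm X⁆, Y⁆)
        + (⁅⁅X, Rm Y⁆, Rm Z⁆ + ⁅⁅Rm Y, Rm Z⁆, X⁆ + ⁅⁅Rm Z, X⁆, Rm Y⁆) := by
      simp only [brR, hR, add_lie, lie_add]
      abel
    rw [expand, k1, k2, k3, k4]
    simp
end

section
/- Let x = (X, X̄) ∈ 𝔄 with both components in A⁰ and all coefficient functions finitely supported, and let y = (Y, Ȳ) ∈ 𝔄 be arbitrary. Then all the traces below are finite sums and ⟨R(x), y⟩ = ⟨x, R*(y)⟩, where R(X, X̄) = (X₊ − X₋ + 2X̄₋, X̄₋ − X̄₊ + 2X₊), R*(Y, Ȳ) = (Y_{≤0} − Y_{>0} + 2Ȳ_{≤0}, Ȳ_{>0} − Ȳ_{≤0} + 2Y_{>0}), and ⟨(X,X̄),(Y,Ȳ)⟩ := tr(XY) + tr(X̄Ȳ). That is, R* is the adjoint of R with respect to the trace pairing on 𝔄. -/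
noncomputable section

/-- The adjoint `R*(Y,Ȳ) = (Y_{≤0} − Y_{>0} + 2Ȳ_{≤0}, Ȳ_{>0} − Ȳ_{≤0} + 2Y_{>0})`. -/
def Rstar (y : DOp × DOp) : DOp × DOp :=
  (truncLe 0 y.1 - truncGt 0 y.1 + (2 : ℂ) • truncLe 0 y.2,
   truncGt 0 y.2 - truncLe 0 y.2 + (2 : ℂ) • truncGt 0 y.1)

/-- for `x = (X,X̄)` with both components in `A⁰` with finitely supported
coefficient functions and arbitrary `y = (Y,Ȳ) ∈ 𝔄`, all the traces involved are finite
sums and `⟨R x, y⟩ = ⟨x, R* y⟩`: `R*` is the adjoint of `R` for the trace pairing. -/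
theorem Rstar_is_adjoint (X Xb Y Yb : DOp)
    (hX : FinSuppOp X) (hXb : FinSuppOp Xb)
    (hY : IsUpper Y) (hYb : IsLower Yb) :
    (Function.support (dres (dmul (Rmat (X, Xb)).1 Y))).Finite
    ∧ (Function.support (dres (dmul (Rmat (X, Xb)).2 Yb))).Finite
    ∧ (Function.support (dres (dmul X (Rstar (Y, Yb)).1))).Finite
    ∧ (Function.support (dres (dmul Xb (Rstar (Y, Yb)).2))).Finite
    ∧ ip (Rmat (X, Xb)) (Y, Yb) = ip (X, Xb) (Rstar (Y, Yb)) := by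
  classical
  set S : Finset (ℤ × ℤ) := (hX.union hXb).toFinset with hSdef
  have hSX : ∀ k n : ℤ, X k n ≠ 0 → (k, n) ∈ S := by
    intro k n h
    simp only [hSdef, Set.Finite.mem_toFinset, Set.mem_union, Function.mem_support]
    exact Or.inl h
  have hSXb : ∀ k n : ℤ, Xb k n ≠ 0 → (k, n) ∈ S := by
    intro k n h
    simp only [hSdef, Set.Finite.mem_toFinset, Set.mem_union, Function.mem_support]
    exact Or.inr h
  set T : Finset ℤ := S.image Prod.fst with hTdef
  set N : Finset ℤ := S.image Prod.snd with hNdef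
  have key : ∀ (A B : DOp), (∀ k n : ℤ, A k n ≠ 0 → (k, n) ∈ S) →
      ∀ n : ℤ, dres (dmul A B) n = ∑ k ∈ T, A k n * B (0 - k) (n + k) := by
    intro A B hA n
    show (∑ᶠ k : ℤ, A k n * B (0 - k) (n + k)) = _
    apply finsum_eq_finset_sum_of_support_subset
    intro k hk
    have hAk : A k n ≠ 0 := by
      intro h
      apply hk
      simp [Function.mem_support, h]
    exact Finset.mem_coe.mpr (Finset.mem_image_of_mem _ (hA _ _ hAk))
  have keysupp : ∀ (A B : DOp), (∀ k n : ℤ, A k n ≠ 0 → (k, n) ∈ S) →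
      Function.support (dres (dmul A B)) ⊆ ↑N := by
    intro A B hA n hn
    rw [Function.mem_support, key A B hA n] at hn
    obtain ⟨k, _, hkne⟩ := Finset.exists_ne_zero_of_sum_ne_zero hn
    have hAk : A k n ≠ 0 := by
      intro h
      exact hkne (by simp [h])
    exact Finset.mem_coe.mpr (Finset.mem_image_of_mem _ (hA _ _ hAk))
  have keytr : ∀ (A B : DOp), (∀ k n : ℤ, A k n ≠ 0 → (k, n) ∈ S) →
      dtr (dmul A B) = ∑ n ∈ N, ∑ k ∈ T, A k n * B (0 - k) (n + k) := by
    intro A B hA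
    have : dtr (dmul A B) = ∑ n ∈ N, dres (dmul A B) n :=
      finsum_eq_finset_sum_of_support_subset _ (keysupp A B hA)
    rw [this]
    exact Finset.sum_congr rfl fun n _ => key A B hA n
  have hR1 : ∀ k n : ℤ, (Rmat (X, Xb)).1 k n ≠ 0 → (k, n) ∈ S := by
    intro k n h
    by_contra hmem
    apply h
    have h1 : X k n = 0 := by by_contra h'; exact hmem (hSX k n h')
    have h2 : Xb k n = 0 := by by_contra h'; exact hmem (hSXb k n h')
    simp [Rmat, dpos, dneg, truncGe, truncLt, Pi.add_apply, Pi.sub_apply,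
      Pi.smul_apply, h1, h2]
  have hR2 : ∀ k n : ℤ, (Rmat (X, Xb)).2 k n ≠ 0 → (k, n) ∈ S := by
    intro k n h
    by_contra hmem
    apply h
    have h1 : X k n = 0 := by by_contra h'; exact hmem (hSX k n h')
    have h2 : Xb k n = 0 := by by_contra h'; exact hmem (hSXb k n h')
    simp [Rmat, dpos, dneg, truncGe, truncLt, Pi.add_apply, Pi.sub_apply,
      Pi.smul_apply, h1, h2]
  refine ⟨N.finite_toSet.subset (keysupp _ _ hR1),
         N.finite_toSet.subset (keysupp _ _ hR2),
         N.finite_toSet.subset (keysupp _ _ hSX),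
         N.finite_toSet.subset (keysupp _ _ hSXb), ?_⟩
  have term : ∀ k n : ℤ,
      (Rmat (X, Xb)).1 k n * Y (0 - k) (n + k) + (Rmat (X, Xb)).2 k n * Yb (0 - k) (n + k)
        = X k n * (Rstar (Y, Yb)).1 (0 - k) (n + k)
          + Xb k n * (Rstar (Y, Yb)).2 (0 - k) (n + k) := by
    intro k n
    simp only [Rmat, Rstar, dpos, dneg, truncGe, truncLt, truncLe, truncGt,
      Pi.add_apply, Pi.sub_apply, Pi.smul_apply, smul_eq_mul]
    split_ifs <;> (try (exfalso; omega)) <;> ring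
  have e1 : ip (Rmat (X, Xb)) (Y, Yb)
      = ∑ n ∈ N, ∑ k ∈ T,
          ((Rmat (X, Xb)).1 k n * Y (0 - k) (n + k)
            + (Rmat (X, Xb)).2 k n * Yb (0 - k) (n + k)) := by
    show dtr (dmul (Rmat (X, Xb)).1 Y) + dtr (dmul (Rmat (X, Xb)).2 Yb) = _
    rw [keytr _ _ hR1, keytr _ _ hR2, ← Finset.sum_add_distrib]
    exact Finset.sum_congr rfl fun n _ => (Finset.sum_add_distrib).symm
  have e2 : ip (X, Xb) (Rstar (Y, Yb))
      = ∑ n ∈ N, ∑ k ∈ T,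
          (X k n * (Rstar (Y, Yb)).1 (0 - k) (n + k)
            + Xb k n * (Rstar (Y, Yb)).2 (0 - k) (n + k)) := by
    show dtr (dmul X (Rstar (Y, Yb)).1) + dtr (dmul Xb (Rstar (Y, Yb)).2) = _
    rw [keytr _ _ hSX, keytr _ _ hSXb, ← Finset.sum_add_distrib]
    exact Finset.sum_congr rfl fun n _ => (Finset.sum_add_distrib).symm
  rw [e1, e2]
  exact Finset.sum_congr rfl fun n _ => Finset.sum_congr rfl fun k _ => term k n
end
end

section
/- Let (L, L̄) ∈ 𝔄 with L of the form Λ + u₀ + u₋₁Λ⁻¹ + ⋯ (i.e. L_{≥1} = Λ) and L̄ of the form ū₋₁Λ⁻¹ + ū₀ + ū₁Λ + ⋯ (i.e. L̄_{≤−2} = 0). Then for every covector (X, X̄) ∈ 𝔄, the value P₁(L,L̄)(X,X̄) lies in (A⁺)_{≤0} ⊕ (A⁻)_{≥−1}: its first component has vanishing coefficients in degrees ≥ 1 and its second component has vanishing coefficients in degrees ≤ −2. Consequently the first Poisson tensor restricts to the affine space of operators of this form without any Dirac correction term. -/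
/-!
Only degrees in `Λ` matter. Since `L_{≥1} = Λ`, `L` has degree `≤ 1`, and `X₋ - X̄₋` has degree
`≤ -1`, so `[L, X₋ - X̄₋]` has degree `≤ 0`, as has the subtracted truncation `(⋯)_{≤0}`.
Dually `L̄` has degree `≥ -1` and `X̄₊ - X₊` degree `≥ 0`, so `[L̄, X̄₊ - X₊]` has degree `≥ -1`,
while `(⋯)_{>0}` has degree `≥ 1`. The degree bound for a product holds term by term in its
defining sum `∑ₖ aₖ(n) bₘ₋ₖ(n+k)`.
-/

noncomputable section

/-- The first Poisson tensor `P₁` on `𝔄`, at the point `Lp = (L, L̄)`,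
evaluated on the covector `x = (X, X̄)`. -/
def P1T (Lp x : DOp × DOp) : DOp × DOp :=
  (dcomm Lp.1 (dneg x.1 - dneg x.2)
      - truncLe 0 (dcomm Lp.1 x.1 + dcomm Lp.2 x.2),
   dcomm Lp.2 (dpos x.2 - dpos x.1)
      - truncGt 0 (dcomm Lp.1 x.1 + dcomm Lp.2 x.2))

/-- The second Poisson tensor `P₂` on `𝔄`. -/
def P2T (Lp x : DOp × DOp) : DOp × DOp :=
  ((1 / 2 : ℂ) •
      (dcomm Lp.1 (dneg (dmul Lp.1 x.1 + dmul x.1 Lp.1)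
            - dneg (dmul Lp.2 x.2 + dmul x.2 Lp.2))
        - dmul Lp.1 (truncLe 0 (dcomm Lp.1 x.1 + dcomm Lp.2 x.2))
        - dmul (truncLe 0 (dcomm Lp.1 x.1 + dcomm Lp.2 x.2)) Lp.1),
   (1 / 2 : ℂ) •
      (dcomm Lp.2 (dpos (dmul Lp.2 x.2 + dmul x.2 Lp.2)
            - dpos (dmul Lp.1 x.1 + dmul x.1 Lp.1))
        - dmul Lp.2 (truncGt 0 (dcomm Lp.1 x.1 + dcomm Lp.2 x.2))
        - dmul (truncGt 0 (dcomm Lp.1 x.1 + dcomm Lp.2 x.2)) Lp.2))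

/-- The third Poisson tensor `P₃` on `𝔄`. -/
def P3T (Lp x : DOp × DOp) : DOp × DOp :=
  (dcomm Lp.1 (dneg (dmul (dmul Lp.1 x.1) Lp.1 - dmul (dmul Lp.2 x.2) Lp.2))
      - dmul (dmul Lp.1 (truncLe 0 (dcomm Lp.1 x.1 + dcomm Lp.2 x.2))) Lp.1,
   dcomm Lp.2 (dpos (dmul (dmul Lp.2 x.2) Lp.2 - dmul (dmul Lp.1 x.1) Lp.1))
      - dmul (dmul Lp.2 (truncGt 0 (dcomm Lp.1 x.1 + dcomm Lp.2 x.2))) Lp.2)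

def DegLe (K : ℤ) (X : DOp) : Prop := ∀ k : ℤ, K < k → X k = 0

def DegGe (K : ℤ) (X : DOp) : Prop := ∀ k : ℤ, k < K → X k = 0

section Degree

variable {a b K K' : ℤ} {X Y : DOp}

theorem DegLe.mono (h : DegLe a X) (hab : a ≤ b) : DegLe b X :=
  fun k hk => h k (hab.trans_lt hk)

theorem DegGe.mono (h : DegGe a X) (hab : b ≤ a) : DegGe b X :=
  fun k hk => h k (hk.trans_le hab)

theorem DegLe.sub (hX : DegLe K X) (hY : DegLe K Y) : DegLe K (X - Y) := by
  intro k hk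
  rw [Pi.sub_apply, hX k hk, hY k hk, sub_zero]

theorem DegGe.sub (hX : DegGe K X) (hY : DegGe K Y) : DegGe K (X - Y) := by
  intro k hk
  rw [Pi.sub_apply, hX k hk, hY k hk, sub_zero]

theorem DegLe.dmul (hX : DegLe a X) (hY : DegLe b Y) : DegLe (a + b) (dmul X Y) := by
  intro m hm
  funext n
  refine finsum_eq_zero_of_forall_eq_zero fun k => ?_
  rcases lt_or_ge a k with hk | hk
  · rw [hX k hk, Pi.zero_apply, zero_mul]
  · rw [hY (m - k) (by omega), Pi.zero_apply, mul_zero]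

theorem DegGe.dmul (hX : DegGe a X) (hY : DegGe b Y) : DegGe (a + b) (dmul X Y) := by
  intro m hm
  funext n
  refine finsum_eq_zero_of_forall_eq_zero fun k => ?_
  rcases lt_or_ge k a with hk | hk
  · rw [hX k hk, Pi.zero_apply, zero_mul]
  · rw [hY (m - k) (by omega), Pi.zero_apply, mul_zero]

theorem DegLe.dcomm (hX : DegLe a X) (hY : DegLe b Y) : DegLe (a + b) (dcomm X Y) :=
  (hX.dmul hY).sub (add_comm b a ▸ hY.dmul hX)

theorem DegGe.dcomm (hX : DegGe a X) (hY : DegGe b Y) : DegGe (a + b) (dcomm X Y) :=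
  (hX.dmul hY).sub (add_comm b a ▸ hY.dmul hX)

theorem degLe_truncLe (K : ℤ) (X : DOp) : DegLe K (truncLe K X) := by
  intro k hk
  funext n
  exact if_neg (not_le.2 hk)

theorem degGe_truncGt (K : ℤ) (X : DOp) : DegGe (K + 1) (truncGt K X) := by
  intro k hk
  funext n
  exact if_neg (by omega)

theorem degLe_dneg (X : DOp) : DegLe (-1) (dneg X) := by
  intro k hk
  funext n
  exact if_neg (by omega)

theorem degGe_dpos (X : DOp) : DegGe 0 (dpos X) := by
  intro k hk
  funext n
  exact if_neg (not_le.2 hk)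

theorem degLe_dlam : DegLe 1 dlam := by
  intro k hk
  funext n
  exact if_neg hk.ne'

theorem DegLe.of_truncGe (h : DegLe K (truncGe K' X)) (hK : K' ≤ K + 1) : DegLe K X := by
  intro k hk
  funext n
  simpa [truncGe, show K' ≤ k by omega] using congrFun (h k hk) n

theorem DegGe.of_truncLe_eq_zero (h : truncLe K X = 0) : DegGe (K + 1) X := by
  intro k hk
  funext n
  simpa [truncLe, show k ≤ K by omega] using congrFun (congrFun h k) n

theorem DegLe.truncGe_eq_zero (h : DegLe K X) (hK : K < K') : truncGe K' X = 0 := by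
  funext k n
  by_cases hk : K' ≤ k
  · simp only [truncGe, if_pos hk, h k (hK.trans_le hk), Pi.zero_apply]
  · exact if_neg hk

theorem DegGe.truncLe_eq_zero (h : DegGe K X) (hK : K' < K) : truncLe K' X = 0 := by
  funext k n
  by_cases hk : k ≤ K'
  · simp only [truncLe, if_pos hk, h k (hk.trans_lt hK), Pi.zero_apply]
  · exact if_neg hk

end Degree

theorem P1_is_tangent_general (L Lb X Xb : DOp)
    (hL : truncGe 1 L = dlam) (hLb : truncLe (-2) Lb = 0) :
    truncGe 1 (P1T (L, Lb) (X, Xb)).1 = 0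
    ∧ truncLe (-2) (P1T (L, Lb) (X, Xb)).2 = 0 := by
  have hL1 : DegLe 1 L := (hL ▸ degLe_dlam).of_truncGe (by norm_num)
  have hLb1 : DegGe (-1) Lb := (DegGe.of_truncLe_eq_zero hLb).mono (by norm_num)
  have hfirst : DegLe 0 (P1T (L, Lb) (X, Xb)).1 :=
    ((hL1.dcomm ((degLe_dneg X).sub (degLe_dneg Xb))).mono (by norm_num)).sub
      (degLe_truncLe 0 _)
  have hsecond : DegGe (-1) (P1T (L, Lb) (X, Xb)).2 :=
    ((hLb1.dcomm ((degGe_dpos Xb).sub (degGe_dpos X))).mono (by norm_num)).sub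
      ((degGe_truncGt 0 _).mono (by norm_num))
  exact ⟨hfirst.truncGe_eq_zero zero_lt_one, hsecond.truncLe_eq_zero (by norm_num)⟩

/-- at a point `(L, L̄)` with `L = Λ + u₀ + u₋₁Λ⁻¹ + ⋯` (`L_{≥1} = Λ`)
and `L̄_{≤−2} = 0`, the value of the first Poisson tensor on any covector `(X,X̄) ∈ 𝔄`
lies in `(A⁺)_{≤0} ⊕ (A⁻)_{≥−1}`: the first Poisson tensor restricts to this affine
space without any Dirac correction. -/
theorem P1_is_tangent (L Lb X Xb : DOp)
    (hL : truncGe 1 L = dlam) (hLb : truncLe (-2) Lb = 0)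
    (hX : IsUpper X) (hXb : IsLower Xb) :
    truncGe 1 (P1T (L, Lb) (X, Xb)).1 = 0
    ∧ truncLe (-2) (P1T (L, Lb) (X, Xb)).2 = 0 :=
  P1_is_tangent_general L Lb X Xb hL hLb
end
end

section
/- Let (L, L̄) ∈ 𝔄 with L_{≥1} = Λ and L̄_{≤−2} = 0 (arbitrary coefficients otherwise), and let X ∈ A⁰ with X = X_{≥0} and X̄ ∈ A⁰ with X̄ = X̄_{≤1}, both with all coefficient functions finitely supported on ℤ. Then the function r := res([L, X] + [L̄, X̄]) : ℤ → ℂ is finitely supported and satisfies ∑_{n∈ℤ} r(n) = 0; equivalently, there exists a finitely supported function f : ℤ → ℂ with r(n) = f(n+1) − f(n) for all n. (This makes the Dirac correction term ζ = (Λ+1)(Λ−1)⁻¹ r in the reduced second Poisson tensor well-defined.) -/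
noncomputable section

/-- Term function of `res (A * Y)` with `Y` on the right. -/
def termR (A Y : DOp) (p : ℤ × ℤ) : ℂ := A p.2 p.1 * Y (0 - p.2) (p.1 + p.2)

/-- Term function of `res (Y * A)` with `Y` on the left. -/
def termL (A Y : DOp) (p : ℤ × ℤ) : ℂ := Y p.2 p.1 * A (0 - p.2) (p.1 + p.2)

lemma termR_supp_fin (A Y : DOp) (hY : FinSuppOp Y) :
    (Function.support (termR A Y)).Finite := by
  have hinj : Function.Injective (fun p : ℤ × ℤ => ((0 : ℤ) - p.2, p.1 + p.2)) := by
    rintro ⟨a, b⟩ ⟨c, d⟩ h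
    simp only [Prod.mk.injEq] at h
    obtain ⟨h1, h2⟩ := h
    have hb : b = d := by omega
    exact Prod.ext (by omega) hb
  refine Set.Finite.subset (hY.preimage (hinj.injOn)) ?_
  intro p hp
  simp only [Function.mem_support, termR] at hp
  have h0 : Y (0 - p.2) (p.1 + p.2) ≠ 0 := right_ne_zero_of_mul hp
  simpa using h0

lemma termL_supp_fin (A Y : DOp) (hY : FinSuppOp Y) :
    (Function.support (termL A Y)).Finite := by
  have hinj : Function.Injective (fun p : ℤ × ℤ => (p.2, p.1)) := by
    rintro ⟨a, b⟩ ⟨c, d⟩ h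
    simp only [Prod.mk.injEq] at h
    exact Prod.ext h.2 h.1
  refine Set.Finite.subset (hY.preimage (hinj.injOn)) ?_
  intro p hp
  simp only [Function.mem_support, termL] at hp
  have h0 : Y p.2 p.1 ≠ 0 := left_ne_zero_of_mul hp
  simpa using h0

lemma row_supp_fin (H : ℤ × ℤ → ℂ) (hH : (Function.support H).Finite) :
    (Function.support fun n => ∑ᶠ k, H (n, k)).Finite := by
  refine Set.Finite.subset (hH.image Prod.fst) ?_
  intro n hn
  simp only [Function.mem_support] at hn
  by_contra hmem
  apply hn
  refine finsum_eq_zero_of_forall_eq_zero fun k => ?_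
  by_contra hk
  exact hmem ⟨(n, k), hk, rfl⟩

lemma sum_rows (H : ℤ × ℤ → ℂ) (hH : (Function.support H).Finite) :
    (∑ᶠ n, ∑ᶠ k, H (n, k)) = ∑ᶠ p, H p := (finsum_curry H hH).symm

/-- The self-inverse reindexing `(n,k) ↦ (n+k,-k)`. -/
def swapE : ℤ × ℤ ≃ ℤ × ℤ where
  toFun p := (p.1 + p.2, -p.2)
  invFun p := (p.1 + p.2, -p.2)
  left_inv := by rintro ⟨a, b⟩; simp
  right_inv := by rintro ⟨a, b⟩; simp

lemma termL_eq_termR_comp (A Y : DOp) (p : ℤ × ℤ) :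
    termL A Y p = termR A Y (swapE p) := by
  obtain ⟨n, k⟩ := p
  simp only [termL, termR, swapE, Equiv.coe_fn_mk, zero_sub, neg_neg, add_neg_cancel_right]
  ring

lemma finsum_termL_eq (A Y : DOp) : (∑ᶠ p, termL A Y p) = ∑ᶠ p, termR A Y p := by
  have : (∑ᶠ p, termR A Y (swapE p)) = ∑ᶠ p, termR A Y p := finsum_comp_equiv swapE
  rw [← this]
  exact finsum_congr fun p => termL_eq_termR_comp A Y p

/-- A finitely supported function summing to zero is a discrete derivative. -/
lemma exists_antiderivative (r : ℤ → ℂ) (hfin : (Function.support r).Finite)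
    (hsum : (∑ᶠ n, r n) = 0) :
    ∃ f : ℤ → ℂ, (Function.support f).Finite ∧ ∀ n : ℤ, r n = f (n + 1) - f n := by
  classical
  set T : Finset ℤ := hfin.toFinset with hT
  refine ⟨fun n => ∑ m ∈ T.filter (· < n), r m, ?_, ?_⟩
  · rcases T.eq_empty_or_nonempty with hTe | hTne
    · have : (fun n => ∑ m ∈ T.filter (· < n), r m) = fun _ => 0 := by
        funext n; simp [hTe]
      rw [this]; simp
    · refine Set.Finite.subset (Set.finite_Ioc (T.min' hTne) (T.max' hTne)) ?_
      intro n hn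
      simp only [Function.mem_support] at hn
      constructor
      · by_contra hlt
        push_neg at hlt
        apply hn
        rw [Finset.filter_false_of_mem, Finset.sum_empty]
        intro m hm
        have := T.min'_le m hm
        omega
      · by_contra hgt
        push_neg at hgt
        apply hn
        rw [Finset.filter_true_of_mem (fun m hm => by
          have := T.le_max' m hm; omega)]
        rw [← hsum]
        exact (finsum_eq_sum_of_support_subset r (by simp [hT])).symm
  · intro n
    show r n = (∑ m ∈ T.filter (· < n + 1), r m) - ∑ m ∈ T.filter (· < n), r m
    have hsplit : T.filter (· < n + 1) = T.filter (· < n) ∪ T.filter (· = n) := by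
      ext m
      simp only [Finset.mem_filter, Finset.mem_union, ← and_or_left]
      refine and_congr_right fun _ => ?_
      omega
    have hdisj : Disjoint (T.filter (· < n)) (T.filter (· = n)) := by
      rw [Finset.disjoint_left]
      intro m hm hm'
      simp only [Finset.mem_filter] at hm hm'
      omega
    rw [hsplit, Finset.sum_union hdisj]
    have : ∑ m ∈ T.filter (· = n), r m = r n := by
      rw [Finset.filter_eq']
      split_ifs with h
      · simp
      · have : r n = 0 := by
          by_contra hr
          exact h (by simp [hT, hr])
        simp [this]
    rw [this]; ring

/-- at a point `(L, L̄)` with `L_{≥1} = Λ` and `L̄_{≤−2} = 0`, and for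
covectors `X = X_{≥0}`, `X̄ = X̄_{≤1}` in `A⁰` with finitely supported coefficients, the
residue `r := res([L,X] + [L̄,X̄])` is finitely supported with total sum zero;
equivalently it is the discrete derivative of a finitely supported function. -/
theorem residue_summable_to_zero (L Lb X Xb : DOp)
    (hL : truncGe 1 L = dlam) (hLb : truncLe (-2) Lb = 0)
    (hX : FinSuppOp X) (hXpos : truncGe 0 X = X)
    (hXb : FinSuppOp Xb) (hXble : truncLe 1 Xb = Xb) :
    (Function.support (dres (dcomm L X + dcomm Lb Xb))).Finite
    ∧ (∑ᶠ n : ℤ, dres (dcomm L X + dcomm Lb Xb) n) = 0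
    ∧ ∃ f : ℤ → ℂ, (Function.support f).Finite
        ∧ ∀ n : ℤ, dres (dcomm L X + dcomm Lb Xb) n = f (n + 1) - f n := by
  classical
  set r : ℤ → ℂ := dres (dcomm L X + dcomm Lb Xb) with hrdef
  set A1 : ℤ → ℂ := fun n => ∑ᶠ k, termR L X (n, k) with hA1def
  set A2 : ℤ → ℂ := fun n => ∑ᶠ k, termL L X (n, k) with hA2def
  set A3 : ℤ → ℂ := fun n => ∑ᶠ k, termR Lb Xb (n, k) with hA3def
  set A4 : ℤ → ℂ := fun n => ∑ᶠ k, termL Lb Xb (n, k) with hA4def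
  have hH1 := termR_supp_fin L X hX
  have hH2 := termL_supp_fin L X hX
  have hH3 := termR_supp_fin Lb Xb hXb
  have hH4 := termL_supp_fin Lb Xb hXb
  have hA1 : (Function.support A1).Finite := row_supp_fin _ hH1
  have hA2 : (Function.support A2).Finite := row_supp_fin _ hH2
  have hA3 : (Function.support A3).Finite := row_supp_fin _ hH3
  have hA4 : (Function.support A4).Finite := row_supp_fin _ hH4
  have hr : ∀ n, r n = (A1 n - A2 n) + (A3 n - A4 n) := by
    intro n
    simp only [hrdef, hA1def, hA2def, hA3def, hA4def, dres, dcomm, dmul, termR, termL,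
      Pi.add_apply, Pi.sub_apply]
  -- finiteness of the support of r
  have hsupp : (Function.support r).Finite := by
    refine Set.Finite.subset (((hA1.union hA2).union hA3).union hA4) ?_
    intro n hn
    simp only [Function.mem_support] at hn
    by_contra h
    simp only [Set.mem_union, Function.mem_support, not_or, not_not] at h
    apply hn
    rw [hr n, h.1.1.1, h.1.1.2, h.1.2, h.2]
    ring
  have hsub12 : (Function.support fun n => A1 n - A2 n).Finite :=
    Set.Finite.subset (hA1.union hA2) fun n hn => by
      simp only [Function.mem_support] at hn
      by_contra h
      simp only [Set.mem_union, Function.mem_support, not_or, not_not] at h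
      exact hn (by rw [h.1, h.2, sub_zero])
  have hsub34 : (Function.support fun n => A3 n - A4 n).Finite :=
    Set.Finite.subset (hA3.union hA4) fun n hn => by
      simp only [Function.mem_support] at hn
      by_contra h
      simp only [Set.mem_union, Function.mem_support, not_or, not_not] at h
      exact hn (by rw [h.1, h.2, sub_zero])
  -- total sum is zero
  have hsum : (∑ᶠ n, r n) = 0 := by
    have e1 : (∑ᶠ n, r n) = ∑ᶠ n, ((A1 n - A2 n) + (A3 n - A4 n)) :=
      finsum_congr hr
    rw [e1, finsum_add_distrib hsub12 hsub34, finsum_sub_distrib hA1 hA2,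
      finsum_sub_distrib hA3 hA4]
    have s1 : (∑ᶠ n, A1 n) = ∑ᶠ p, termR L X p := sum_rows _ hH1
    have s2 : (∑ᶠ n, A2 n) = ∑ᶠ p, termR L X p := by
      rw [hA2def, sum_rows _ hH2]; exact finsum_termL_eq L X
    have s3 : (∑ᶠ n, A3 n) = ∑ᶠ p, termR Lb Xb p := sum_rows _ hH3
    have s4 : (∑ᶠ n, A4 n) = ∑ᶠ p, termR Lb Xb p := by
      rw [hA4def, sum_rows _ hH4]; exact finsum_termL_eq Lb Xb
    rw [s1, s2, s3, s4]; ring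
  exact ⟨hsupp, hsum, exists_antiderivative r hsupp hsum⟩
end
end
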